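/- arXiv:2502.10936 — 7 statements merged into one kernel-verified Lean document; each statement's English description precedes it below -/
import Mathlib

section
/- Let p : Q̄_T → ℝ be bounded and measurable, and let u ∈ Z^1 satisfy u(x,0) ≥ 0 for all x ∈ Ω̄ and ∂_t u(x,t) ≥ ∫_Ω J(x,y) u(y,t) dy + p(x,t) u(x,t) for all x ∈ Ω̄ and t ∈ (0,T]. Then u(x,t) ≥ 0 for all (x,t) ∈ Q̄_T. -/
open MeasureTheory Set Function
open Topology Filter

/-!
Where `u(x,t) < 0` and `u(·,t) ≥ -A`, the inequality gives `∂ₜu(x,t) ≥ -(1 + ‖p‖∞) A`, since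
`J ≥ 0` and `∫_Ω J(x,·) ≤ 1`. Comparing `u(x,·)` with a linear barrier, a lower bound `-A` on a
time slab `[t₀, t₀ + h]`, `h = 1/(2(1 + ‖p‖∞))`, improves to `-A/2` as soon as `u(·,t₀) ≥ 0`.
Iterating the halving gives `u ≥ 0` on the slab, and finitely many slabs cover `[0,T]`.
-/

theorem neg_le_setIntegral_mul_of_neg_le {α : Type*} [MeasurableSpace α] {μ : Measure α}
    {s : Set α} (hs : MeasurableSet s) {k g : α → ℝ} (hk : ∀ y ∈ s, 0 ≤ k y)
    (hki : IntegrableOn k s μ) (hk1 : ∫ y in s, k y ∂μ ≤ 1) {A : ℝ} (hA : 0 ≤ A)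
    (hg : ∀ y ∈ s, -A ≤ g y) : -A ≤ ∫ y in s, k y * g y ∂μ := by
  by_cases hkg : IntegrableOn (fun y => k y * g y) s μ
  · have hmono : ∫ y in s, k y * -A ∂μ ≤ ∫ y in s, k y * g y ∂μ :=
      setIntegral_mono_on (hki.mul_const _) hkg hs fun y hy =>
        mul_le_mul_of_nonneg_left (hg y hy) (hk y hy)
    rw [integral_mul_const] at hmono
    nlinarith
  · rw [integral_undef hkg]
    linarith

theorem neg_mul_sub_le_of_deriv_ge_of_neg {f f' : ℝ → ℝ} {a b L : ℝ} (hL : 0 ≤ L)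
    (hab : a ≤ b) (hfa : 0 ≤ f a) (hf : ContinuousOn f (Icc a b))
    (hf' : ∀ r ∈ Ico a b, HasDerivWithinAt f (f' r) (Ici r) r)
    (hbound : ∀ r ∈ Ioo a b, f r < 0 → -L ≤ f' r) :
    -(L * (b - a)) ≤ f b := by
  -- The fence is strict so that it can only be touched where `f < 0`; then `δ → 0`.
  have hfence : ∀ δ > 0, -f b ≤ δ + (L + δ) * (b - a) := by
    intro δ hδ
    refine image_le_of_deriv_right_lt_deriv_boundary (f := fun r => -f r) hf.neg
      (fun r hr => (hf' r hr).neg) (B := fun r => δ + (L + δ) * (r - a)) (B' := fun _ => L + δ)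
      (by simp only [sub_self, mul_zero, add_zero]; linarith)
      (fun r => by simpa using (((hasDerivAt_id r).sub_const a).const_mul (L + δ)).const_add δ)
      ?_ ⟨hab, le_rfl⟩
    intro r hr hfr
    have hra : r ≠ a := by
      rintro rfl
      nlinarith
    have hneg : f r < 0 := by nlinarith [hr.1]
    linarith [hbound r ⟨lt_of_le_of_ne hr.1 hra.symm, hr.2⟩ hneg]
  have hlim : Tendsto (fun δ : ℝ => δ + (L + δ) * (b - a)) (𝓝[>] 0) (𝓝 (L * (b - a))) := by
    have : Continuous (fun δ : ℝ => δ + (L + δ) * (b - a)) := by fun_prop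
    simpa using (this.tendsto 0).mono_left nhdsWithin_le_nhds
  linarith [ge_of_tendsto hlim (eventually_nhdsWithin_of_forall hfence)]

theorem nonneg_of_neg_le_half {β : Type*} {s : Set β} {f : β → ℝ} {B : ℝ}
    (hB : ∀ q ∈ s, -B ≤ f q)
    (hhalf : ∀ A, 0 ≤ A → (∀ q ∈ s, -A ≤ f q) → ∀ q ∈ s, -(A / 2) ≤ f q) :
    ∀ q ∈ s, 0 ≤ f q := by
  have hpow : ∀ n : ℕ, ∀ q ∈ s, -(max B 0 / 2 ^ n) ≤ f q := by
    intro n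
    induction n with
    | zero => simpa using fun q hq => (neg_le_neg (le_max_left B 0)).trans (hB q hq)
    | succ n ih => simpa [pow_succ, div_div] using hhalf _ (by positivity) ih
  intro q hq
  have hlim : Tendsto (fun n : ℕ => -(max B 0 / 2 ^ n)) atTop (𝓝 0) := by
    simpa using (tendsto_const_nhds.div_atTop (tendsto_pow_atTop_atTop_of_one_lt (one_lt_two (α := ℝ)))).neg
  exact le_of_tendsto' hlim fun n => hpow n q hq

section

variable {α : Type*} (D : Set α) {T L : ℝ} (u ut : α → ℝ → ℝ)

theorem nonneg_on_step_of_nonneg_at (hL : 0 < L)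
    (hubdd : ∃ B, ∀ x ∈ D, ∀ t ∈ Icc 0 T, -B ≤ u x t)
    (huderiv : ∀ x ∈ D, ∀ t ∈ Icc 0 T, HasDerivWithinAt (u x) (ut x t) (Icc 0 T) t)
    (hbound : ∀ A, 0 ≤ A → ∀ t ∈ Ioc 0 T, (∀ y ∈ D, -A ≤ u y t) →
      ∀ x ∈ D, u x t < 0 → -(L * A) ≤ ut x t)
    {t₀ : ℝ} (ht₀ : 0 ≤ t₀) (hu₀ : ∀ x ∈ D, 0 ≤ u x t₀) :
    ∀ x ∈ D, ∀ t ∈ Icc 0 T, t₀ ≤ t → t ≤ t₀ + 1 / (2 * L) → 0 ≤ u x t := by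
  obtain ⟨B, hB⟩ := hubdd
  let s := {q : α × ℝ | q.1 ∈ D ∧ q.2 ∈ Icc 0 T ∧ t₀ ≤ q.2 ∧ q.2 ≤ t₀ + 1 / (2 * L)}
  suffices ∀ q ∈ s, 0 ≤ uncurry u q from fun x hx t ht h₀ h₁ => this (x, t) ⟨hx, ht, h₀, h₁⟩
  refine nonneg_of_neg_le_half (fun q hq => hB _ hq.1 _ hq.2.1) ?_
  rintro A hA hAu ⟨x, t⟩ ⟨hx, ht, ht₀t, htstep⟩
  have hIcc : Icc t₀ t ⊆ Icc 0 T := Icc_subset_Icc ht₀ ht.2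
  have hbarrier : -(L * A * (t - t₀)) ≤ u x t := by
    refine neg_mul_sub_le_of_deriv_ge_of_neg (by positivity) ht₀t (hu₀ x hx)
      (fun r hr => (huderiv x hx r (hIcc hr)).continuousWithinAt.mono hIcc)
      (fun r hr => (huderiv x hx r (hIcc (Ico_subset_Icc_self hr))).mono_of_mem_nhdsWithin
        (Icc_mem_nhdsGE_of_mem ⟨ht₀.trans hr.1, hr.2.trans_le ht.2⟩)) fun r hr hneg => ?_
    refine hbound A hA r ⟨ht₀.trans_lt hr.1, hr.2.le.trans ht.2⟩ (fun y hy => ?_) x hx hneg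
    exact hAu (y, r) ⟨hy, hIcc (Ioo_subset_Icc_self hr), hr.1.le, hr.2.le.trans htstep⟩
  have hstep : L * A * (t - t₀) ≤ A / 2 :=
    calc L * A * (t - t₀) ≤ L * A * (1 / (2 * L)) :=
          mul_le_mul_of_nonneg_left (by linarith) (by positivity)
      _ = A / 2 := by field_simp
  show -(A / 2) ≤ u x t
  linarith

theorem nonneg_of_deriv_ge_of_neg (hL : 0 < L)
    (hubdd : ∃ B, ∀ x ∈ D, ∀ t ∈ Icc 0 T, -B ≤ u x t)
    (huderiv : ∀ x ∈ D, ∀ t ∈ Icc 0 T, HasDerivWithinAt (u x) (ut x t) (Icc 0 T) t)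
    (hinit : ∀ x ∈ D, 0 ≤ u x 0)
    (hbound : ∀ A, 0 ≤ A → ∀ t ∈ Ioc 0 T, (∀ y ∈ D, -A ≤ u y t) →
      ∀ x ∈ D, u x t < 0 → -(L * A) ≤ ut x t) :
    ∀ x ∈ D, ∀ t ∈ Icc 0 T, 0 ≤ u x t := by
  have hh : 0 < 1 / (2 * L) := by positivity
  have hsteps : ∀ n : ℕ, ∀ x ∈ D, ∀ t ∈ Icc 0 T, t ≤ n * (1 / (2 * L)) → 0 ≤ u x t := by
    intro n
    induction n with
    | zero =>
      intro x hx t ht htn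
      rw [le_antisymm (by simpa using htn) ht.1]
      exact hinit x hx
    | succ n ih =>
      intro x hx t ht htn
      rcases le_or_gt t (n * (1 / (2 * L))) with hle | hlt
      · exact ih x hx t ht hle
      refine nonneg_on_step_of_nonneg_at D u ut hL hubdd huderiv hbound (by positivity)
        (fun y hy => ih y hy _ ⟨by positivity, hlt.le.trans ht.2⟩ le_rfl) x hx t ht hlt.le ?_
      push_cast at htn
      linarith
  intro x hx t ht
  obtain ⟨n, hn⟩ := exists_nat_ge (T / (1 / (2 * L)))
  exact hsteps n x hx t ht (ht.2.trans ((div_le_iff₀ hh).mp hn))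

end

theorem stmt_0_general {N : ℕ} (Ω : Set (Fin N → ℝ))
    (hΩopen : IsOpen Ω)
    (T : ℝ)
    -- the kernel J satisfies condition (J)
    (J : (Fin N → ℝ) → (Fin N → ℝ) → ℝ)
    (hJnn : ∀ x y, 0 ≤ J x y)
    (hJint : ∀ x, (∫ y, J x y) = 1)
    -- p is bounded and measurable on Q̄_T
    (p : (Fin N → ℝ) → ℝ → ℝ)
    (hpbdd : ∃ M : ℝ, ∀ x ∈ closure Ω, ∀ t ∈ Icc (0:ℝ) T, |p x t| ≤ M)
    -- u ∈ Z¹ : bounded measurable, with u(x,·) ∈ C¹([0,T]) with derivative ut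
    (u ut : (Fin N → ℝ) → ℝ → ℝ)
    (hubdd : ∃ M : ℝ, ∀ x ∈ closure Ω, ∀ t ∈ Icc (0:ℝ) T, |u x t| ≤ M)
    (huderiv : ∀ x ∈ closure Ω, ∀ t ∈ Icc (0:ℝ) T,
      HasDerivWithinAt (u x) (ut x t) (Icc (0:ℝ) T) t)
    -- initial data and differential inequality
    (hinit : ∀ x ∈ closure Ω, 0 ≤ u x 0)
    (hineq : ∀ x ∈ closure Ω, ∀ t ∈ Ioc (0:ℝ) T,
      (∫ y in Ω, J x y * u y t) + p x t * u x t ≤ ut x t) :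
    ∀ x ∈ closure Ω, ∀ t ∈ Icc (0:ℝ) T, 0 ≤ u x t := by
  obtain ⟨M, hM⟩ := hpbdd
  obtain ⟨B, hB⟩ := hubdd
  have hJ : ∀ x, Integrable (J x) := fun x =>
    Integrable.of_integral_ne_zero (by rw [hJint x]; exact one_ne_zero)
  refine nonneg_of_deriv_ge_of_neg (closure Ω) (L := 1 + max M 0) u ut (by positivity)
    ⟨B, fun x hx t ht => neg_le_of_abs_le (hB x hx t ht)⟩ huderiv hinit ?_
  intro A hA t ht hAu x hx hneg
  have hint : -A ≤ ∫ y in Ω, J x y * u y t :=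
    neg_le_setIntegral_mul_of_neg_le hΩopen.measurableSet (fun y _ => hJnn x y) (hJ x).integrableOn
      (hJint x ▸ setIntegral_le_integral (hJ x) (.of_forall (hJnn x))) hA
      (fun y hy => hAu y (subset_closure hy))
  have hp : |p x t| ≤ max M 0 := (hM x hx t (Ioc_subset_Icc_self ht)).trans (le_max_left M 0)
  have hpu : -(max M 0 * A) ≤ p x t * u x t := by
    have := hAu x hx
    nlinarith [abs_le.mp hp]
  linarith [hineq x hx t ht]

/-- Maximum principle (nonnegativity) for the scalar nonlocal equation
`∂ₜ u ≥ ∫_Ω J(x,y) u(y,t) dy + p(x,t) u(x,t)` with nonnegative initial data. -/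
theorem stmt_0 {N : ℕ} (Ω : Set (Fin N → ℝ)) (hΩne : Ω.Nonempty)
    (hΩopen : IsOpen Ω) (hΩbdd : Bornology.IsBounded Ω)
    (T : ℝ) (hT : 0 < T)
    -- the kernel J satisfies condition (J)
    (J : (Fin N → ℝ) → (Fin N → ℝ) → ℝ)
    (hJcont : Continuous (Function.uncurry J))
    (hJnn : ∀ x y, 0 ≤ J x y)
    (hJdiag : ∀ x, 0 < J x x)
    (hJint : ∀ x, (∫ y, J x y) = 1)
    -- p is bounded and measurable on Q̄_T
    (p : (Fin N → ℝ) → ℝ → ℝ)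
    (hpmeas : Measurable (Function.uncurry p))
    (hpbdd : ∃ M : ℝ, ∀ x ∈ closure Ω, ∀ t ∈ Icc (0:ℝ) T, |p x t| ≤ M)
    -- u ∈ Z¹ : bounded measurable, with u(x,·) ∈ C¹([0,T]) with derivative ut
    (u ut : (Fin N → ℝ) → ℝ → ℝ)
    (humeas : Measurable (Function.uncurry u))
    (hubdd : ∃ M : ℝ, ∀ x ∈ closure Ω, ∀ t ∈ Icc (0:ℝ) T, |u x t| ≤ M)
    (huderiv : ∀ x ∈ closure Ω, ∀ t ∈ Icc (0:ℝ) T,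
      HasDerivWithinAt (u x) (ut x t) (Icc (0:ℝ) T) t)
    (hutcont : ∀ x ∈ closure Ω, ContinuousOn (ut x) (Icc (0:ℝ) T))
    -- initial data and differential inequality
    (hinit : ∀ x ∈ closure Ω, 0 ≤ u x 0)
    (hineq : ∀ x ∈ closure Ω, ∀ t ∈ Ioc (0:ℝ) T,
      (∫ y in Ω, J x y * u y t) + p x t * u x t ≤ ut x t) :
    ∀ x ∈ closure Ω, ∀ t ∈ Icc (0:ℝ) T, 0 ≤ u x t :=
  stmt_0_general Ω hΩopen T J hJnn hJint p hpbdd u ut hubdd huderiv hinit hineq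
end

section
/- Let p : Q̄_T → ℝ be bounded and measurable, and let u ∈ Z^1 satisfy u(x,t) ≥ 0 for all (x,t) ∈ Q̄_T and ∂_t u(x,t) ≥ ∫_Ω J(x,y) u(y,t) dy + p(x,t) u(x,t) for all (x,t) ∈ Q_T. If u(x₀,t₀) = 0 for some (x₀,t₀) ∈ Q_T, then u(x₀,t) = 0 for all t ∈ [0,t₀]. -/
open MeasureTheory Set Function

/-! The exponential weight `e^{Mt}`, with `M` a bound for `|p|`, absorbs the zeroth-order term:
since the integral term is nonnegative, `∂ₜu ≥ -M u` along the fibre `x = x₀`, so `u(x₀,t) e^{Mt}`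
is nondecreasing in `t`. A nonnegative nondecreasing function vanishing at `t₀` vanishes on
`[0,t₀]`. -/

lemma monotoneOn_mul_exp_of_neg_mul_le_deriv {f f' : ℝ → ℝ} {a b M : ℝ}
    (hcont : ContinuousOn f (Icc a b)) (hf : ∀ t ∈ Ioo a b, HasDerivAt f (f' t) t)
    (hf' : ∀ t ∈ Ioo a b, -M * f t ≤ f' t) :
    MonotoneOn (fun t => f t * Real.exp (M * t)) (Icc a b) := by
  have hexp : ∀ t, HasDerivAt (fun s => Real.exp (M * s)) (Real.exp (M * t) * M) t := fun t =>
    (Real.hasDerivAt_exp (M * t)).comp t ((hasDerivAt_id t).const_mul M |>.congr_deriv (mul_one M))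
  refine monotoneOn_of_hasDerivWithinAt_nonneg (f' := fun t => (f' t + M * f t) * Real.exp (M * t))
    (convex_Icc a b) (hcont.mul (Real.continuous_exp.comp (continuous_const_mul M)).continuousOn)
    (fun t ht => ?_) (fun t ht => ?_) <;> rw [interior_Icc] at ht
  · exact ((hf t ht).mul (hexp t)).hasDerivWithinAt.congr_deriv (by ring)
  · have := hf' t ht
    exact mul_nonneg (by linarith) (Real.exp_nonneg _)

lemma eq_zero_of_neg_mul_le_deriv_of_nonneg {f f' : ℝ → ℝ} {a b M : ℝ}
    (hcont : ContinuousOn f (Icc a b)) (hf : ∀ t ∈ Ioo a b, HasDerivAt f (f' t) t)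
    (hf' : ∀ t ∈ Ioo a b, -M * f t ≤ f' t) (hnn : ∀ t ∈ Icc a b, 0 ≤ f t) (hb : f b = 0) :
    ∀ t ∈ Icc a b, f t = 0 := by
  intro t ht
  have hle : f t * Real.exp (M * t) ≤ f b * Real.exp (M * b) :=
    monotoneOn_mul_exp_of_neg_mul_le_deriv hcont hf hf' ht
      (right_mem_Icc.mpr (ht.1.trans ht.2)) ht.2
  rw [hb, zero_mul] at hle
  exact le_antisymm (nonpos_of_mul_nonpos_left hle (Real.exp_pos _)) (hnn t ht)

theorem stmt_3_general {N : ℕ} (Ω : Set (Fin N → ℝ))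
    (hΩopen : IsOpen Ω)
    (T : ℝ)
    -- the kernel J satisfies condition (J)
    (J : (Fin N → ℝ) → (Fin N → ℝ) → ℝ)
    (hJnn : ∀ x y, 0 ≤ J x y)
    -- p is bounded and measurable on Q̄_T
    (p : (Fin N → ℝ) → ℝ → ℝ)
    (hpbdd : ∃ M : ℝ, ∀ x ∈ closure Ω, ∀ t ∈ Icc (0:ℝ) T, |p x t| ≤ M)
    -- u ∈ Z¹ : bounded measurable, with u(x,·) ∈ C¹([0,T]) with derivative ut
    (u ut : (Fin N → ℝ) → ℝ → ℝ)
    (huderiv : ∀ x ∈ closure Ω, ∀ t ∈ Icc (0:ℝ) T,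
      HasDerivWithinAt (u x) (ut x t) (Icc (0:ℝ) T) t)
    (hunn : ∀ x ∈ closure Ω, ∀ t ∈ Icc (0:ℝ) T, 0 ≤ u x t)
    (hineq : ∀ x ∈ closure Ω, ∀ t ∈ Ioc (0:ℝ) T,
      (∫ y in Ω, J x y * u y t) + p x t * u x t ≤ ut x t)
    (x₀ : Fin N → ℝ) (hx₀ : x₀ ∈ closure Ω)
    (t₀ : ℝ) (ht₀ : t₀ ∈ Ioc (0:ℝ) T) (hzero : u x₀ t₀ = 0) :
    ∀ t ∈ Icc (0:ℝ) t₀, u x₀ t = 0 := by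
  obtain ⟨M, hM⟩ := hpbdd
  have hsub : Icc (0:ℝ) t₀ ⊆ Icc 0 T := Icc_subset_Icc_right ht₀.2
  have hIoo : ∀ t ∈ Ioo (0:ℝ) t₀, t ∈ Icc 0 T := fun t ht => hsub (Ioo_subset_Icc_self ht)
  refine eq_zero_of_neg_mul_le_deriv_of_nonneg (f' := ut x₀) (M := M)
    (fun t ht => (huderiv x₀ hx₀ t (hsub ht)).continuousWithinAt.mono hsub)
    (fun t ht => (huderiv x₀ hx₀ t (hIoo t ht)).hasDerivAt
      (Icc_mem_nhds ht.1 (ht.2.trans_le ht₀.2)))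
    (fun t ht => ?_) (fun t ht => hunn x₀ hx₀ t (hsub ht)) hzero
  have htT := hIoo t ht
  have hint : 0 ≤ ∫ y in Ω, J x₀ y * u y t :=
    setIntegral_nonneg hΩopen.measurableSet fun y hy =>
      mul_nonneg (hJnn _ _) (hunn y (subset_closure hy) t htT)
  have hp : -M ≤ p x₀ t := neg_le_of_abs_le (hM x₀ hx₀ t htT)
  have hu := hunn x₀ hx₀ t htT
  nlinarith [hineq x₀ hx₀ t ⟨ht.1, htT.2⟩]

/-- if `u ≥ 0` on `Q̄_T` satisfies the differential inequality on `Q_T`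
and vanishes at some point `(x₀,t₀) ∈ Q_T`, then `u(x₀,·) ≡ 0` on `[0,t₀]`. -/
theorem stmt_3 {N : ℕ} (Ω : Set (Fin N → ℝ)) (hΩne : Ω.Nonempty)
    (hΩopen : IsOpen Ω) (hΩbdd : Bornology.IsBounded Ω)
    (T : ℝ) (hT : 0 < T)
    -- the kernel J satisfies condition (J)
    (J : (Fin N → ℝ) → (Fin N → ℝ) → ℝ)
    (hJcont : Continuous (Function.uncurry J))
    (hJnn : ∀ x y, 0 ≤ J x y)
    (hJdiag : ∀ x, 0 < J x x)
    (hJint : ∀ x, (∫ y, J x y) = 1)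
    -- p is bounded and measurable on Q̄_T
    (p : (Fin N → ℝ) → ℝ → ℝ)
    (hpmeas : Measurable (Function.uncurry p))
    (hpbdd : ∃ M : ℝ, ∀ x ∈ closure Ω, ∀ t ∈ Icc (0:ℝ) T, |p x t| ≤ M)
    -- u ∈ Z¹ : bounded measurable, with u(x,·) ∈ C¹([0,T]) with derivative ut
    (u ut : (Fin N → ℝ) → ℝ → ℝ)
    (humeas : Measurable (Function.uncurry u))
    (hubdd : ∃ M : ℝ, ∀ x ∈ closure Ω, ∀ t ∈ Icc (0:ℝ) T, |u x t| ≤ M)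
    (huderiv : ∀ x ∈ closure Ω, ∀ t ∈ Icc (0:ℝ) T,
      HasDerivWithinAt (u x) (ut x t) (Icc (0:ℝ) T) t)
    (hutcont : ∀ x ∈ closure Ω, ContinuousOn (ut x) (Icc (0:ℝ) T))
    (hunn : ∀ x ∈ closure Ω, ∀ t ∈ Icc (0:ℝ) T, 0 ≤ u x t)
    (hineq : ∀ x ∈ closure Ω, ∀ t ∈ Ioc (0:ℝ) T,
      (∫ y in Ω, J x y * u y t) + p x t * u x t ≤ ut x t)
    (x₀ : Fin N → ℝ) (hx₀ : x₀ ∈ closure Ω)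
    (t₀ : ℝ) (ht₀ : t₀ ∈ Ioc (0:ℝ) T) (hzero : u x₀ t₀ = 0) :
    ∀ t ∈ Icc (0:ℝ) t₀, u x₀ t = 0 :=
  stmt_3_general Ω hΩopen T J hJnn p hpbdd u ut huderiv hunn hineq x₀ hx₀ t₀ ht₀ hzero
end

section
/- (Comparison principle) For i = 1,…,m let d_i > 0, let J_i satisfy (J), and let d*_i be as in (D). Let each f_i : Q̄_T × [0,∞)^m → ℝ be continuous, locally Lipschitz in u uniformly in (x,t), and cooperative: f_i(x,t,u) ≤ f_i(x,t,v) whenever 0 ≤ u ≤ v componentwise and u_i = v_i. Suppose ū, u̲ ∈ Z^m are nonnegative on Q̄_T and satisfy, for all i and all (x,t) ∈ Q_T: ∂_t ū_i ≥ d_i ∫_Ω J_i(x,y) ū_i(y,t) dy − d*_i(x) ū_i + f_i(x,t,ū) and ∂_t u̲_i ≤ d_i ∫_Ω J_i(x,y) u̲_i(y,t) dy − d*_i(x) u̲_i + f_i(x,t,u̲), together with ū(x,0) ≥ u̲(x,0) for all x ∈ Ω̄. Then ū(x,t) ≥ u̲(x,t) componentwise for all (x,t) ∈ Q̄_T. 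-/
/-! Put `w = u̲ - ū`. At a time where every component of `w` is at most `b > 0`, a positive
component `wᵢ(x, t)` grows at rate at most `(dᵢ + L) b`: the nonlocal term averages
`wᵢ(·, t) ≤ b` against a nonnegative kernel of mass at most one, the term `-d*ᵢ wᵢ` is
nonpositive, and comparing `fᵢ(u̲)` with `fᵢ` at `ū ⊓ u̲` with `i`-th entry `ūᵢ` bounds the
reaction difference by Lipschitz continuity and cooperativity. Starting from `w ≤ 0`, a linear
barrier therefore halves every bound on `w` over a short time window, so `w ≤ 0` on that window,
and finitely many windows cover `[0, T]`. -/

open MeasureTheory Set Function Filter Topology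

theorem nonpos_of_forall_le_half {κ : Type*} {g : κ → ℝ} {B : ℝ} (hB : ∀ p, g p ≤ B)
    (half : ∀ b > 0, (∀ p, g p ≤ b) → ∀ p, g p ≤ b / 2) (p : κ) : g p ≤ 0 := by
  have hpow : ∀ n : ℕ, ∀ p, g p ≤ max B 1 / 2 ^ n := by
    intro n
    induction n with
    | zero => simpa using fun p => (hB p).trans (le_max_left B 1)
    | succ n ih => simpa [pow_succ, div_div] using half _ (by positivity) ih
  have hlim : Tendsto (fun n : ℕ => max B 1 / 2 ^ n) atTop (𝓝 0) :=
    tendsto_const_nhds.div_atTop (tendsto_pow_atTop_atTop_of_one_lt one_lt_two)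
  exact ge_of_tendsto' hlim fun n => hpow n p

theorem le_add_mul_sub_of_deriv_lt {w w' : ℝ → ℝ} {a b δ s : ℝ} (hs : 0 ≤ s)
    (hw : ContinuousOn w (Icc a b)) (hw' : ∀ t ∈ Ico a b, HasDerivWithinAt w (w' t) (Ici t) t)
    (ha : w a < δ) (bound : ∀ t ∈ Ioo a b, δ ≤ w t → w' t < s) :
    ∀ t ∈ Icc a b, w t ≤ δ + s * (t - a) := by
  refine fun t ht => image_le_of_deriv_right_lt_deriv_boundary hw hw' (by simpa using ha.le)
    (fun t => (((hasDerivAt_id t).sub_const a).const_mul s).const_add δ) ?_ ht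
  rintro t ⟨hat, htb⟩ hwt
  simp only [id] at hwt
  rcases hat.eq_or_lt with rfl | hat
  · simp only [sub_self, mul_zero, add_zero] at hwt
    exact absurd hwt ha.ne
  · simpa using bound t ⟨hat, htb⟩ (by nlinarith)

section Family

variable {ι : Type*} {w w' : ι → ℝ → ℝ} {c B : ℝ}

theorem nonpos_of_deriv_le_mul_bound_of_short {t₀ t₁ : ℝ} (hc : 0 ≤ c)
    (hw : ∀ j, ContinuousOn (w j) (Icc t₀ t₁))
    (hw' : ∀ j, ∀ t ∈ Ico t₀ t₁, HasDerivWithinAt (w j) (w' j t) (Ici t) t)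
    (hB : ∀ j, ∀ t ∈ Icc t₀ t₁, w j t ≤ B) (hshort : (c + 1) * (t₁ - t₀) ≤ 1 / 4)
    (h₀ : ∀ j, w j t₀ ≤ 0)
    (hrate : ∀ t ∈ Ioo t₀ t₁, ∀ b, (∀ k, w k t ≤ b) → ∀ j, 0 < w j t → w' j t ≤ c * b) :
    ∀ j, ∀ t ∈ Icc t₀ t₁, w j t ≤ 0 := by
  intro j t ht
  refine nonpos_of_forall_le_half (g := fun p : ι × Icc t₀ t₁ => w p.1 p.2)
    (fun p => hB p.1 p.2 p.2.2) ?_ (j, ⟨t, ht⟩)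
  rintro b hb hle ⟨k, s, hs⟩
  have hbarrier := le_add_mul_sub_of_deriv_lt (δ := b / 4) (s := (c + 1) * b)
    (by positivity) (hw k) (hw' k) (by linarith [h₀ k]) (fun s hs hδ => ?_) s hs
  · have hgrowth : (c + 1) * b * (s - t₀) ≤ b / 4 := by
      have hcb : 0 ≤ (c + 1) * b := by positivity
      nlinarith [mul_le_mul_of_nonneg_left hshort hb.le,
        mul_le_mul_of_nonneg_left (sub_le_sub_right hs.2 t₀) hcb]
    dsimp only
    linarith
  · have := hrate s hs b (fun k => hle (k, ⟨s, Ioo_subset_Icc_self hs⟩)) k (by linarith)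
    linarith

theorem nonpos_of_deriv_le_mul_bound {T : ℝ} (hc : 0 ≤ c)
    (hw : ∀ j, ∀ t ∈ Icc 0 T, HasDerivWithinAt (w j) (w' j t) (Icc 0 T) t)
    (hB : ∀ j, ∀ t ∈ Icc 0 T, w j t ≤ B) (h₀ : ∀ j, w j 0 ≤ 0)
    (hrate : ∀ t ∈ Ioc 0 T, ∀ b, (∀ k, w k t ≤ b) → ∀ j, 0 < w j t → w' j t ≤ c * b) :
    ∀ j, ∀ t ∈ Icc 0 T, w j t ≤ 0 := by
  set τ := 1 / (4 * (c + 1))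
  have hτ : 0 < τ := by positivity
  have hstep : ∀ n : ℕ, ∀ t ∈ Icc 0 T, t ≤ n * τ → ∀ j, w j t ≤ 0 := by
    intro n
    induction n with
    | zero =>
      intro t ht htn
      simpa [le_antisymm (by simpa using htn) ht.1] using h₀
    | succ n ih =>
      intro t ht htn j
      rcases le_or_gt t (n * τ) with h | h
      · exact ih t ht h j
      have hnτ : 0 ≤ (n : ℝ) * τ := by positivity
      have hsub : Icc (n * τ) t ⊆ Icc 0 T := Icc_subset_Icc hnτ ht.2
      have hshort : (c + 1) * (t - n * τ) ≤ 1 / 4 := by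
        have hcτ : (c + 1) * τ = 1 / 4 := by simp only [τ]; field_simp
        push_cast at htn
        nlinarith
      refine nonpos_of_deriv_le_mul_bound_of_short hc
        (fun j s hs => ((hw j s (hsub hs)).continuousWithinAt).mono hsub)
        (fun j s hs => (hw j s (hsub (Ico_subset_Icc_self hs))).mono_of_mem_nhdsWithin
          (Icc_mem_nhdsGE_of_mem ⟨(hsub (Ico_subset_Icc_self hs)).1, hs.2.trans_le ht.2⟩))
        (fun j s hs => hB j s (hsub hs)) hshort (ih _ ⟨hnτ, h.le.trans ht.2⟩ le_rfl)
        (fun s hs => hrate s ⟨hnτ.trans_lt hs.1, (hsub (Ioo_subset_Icc_self hs)).2⟩)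
        j t (right_mem_Icc.2 h.le)
  intro j t ht
  obtain ⟨n, hn⟩ := exists_nat_ge (t / τ)
  exact hstep n t ht (by rwa [div_le_iff₀ hτ] at hn) j

end Family

theorem sub_le_of_cooperative {ι : Type*} [Fintype ι] [DecidableEq ι] {g : (ι → ℝ) → ℝ} {i : ι}
    {R L b : ℝ} (hL : 0 ≤ L)
    (hlip : ∀ v w : ι → ℝ, 0 ≤ v → 0 ≤ w → ‖v‖ ≤ R → ‖w‖ ≤ R → |g v - g w| ≤ L * ‖v - w‖)
    (hcoop : ∀ v w : ι → ℝ, 0 ≤ v → v ≤ w → v i = w i → g v ≤ g w)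
    {u v : ι → ℝ} (hu : 0 ≤ u) (hv : 0 ≤ v) (huR : ‖u‖ ≤ R) (hvR : ‖v‖ ≤ R)
    (hvu : v i ≤ u i) (hb : ∀ k, u k - v k ≤ b) : g u - g v ≤ L * b := by
  set c := update (u ⊓ v) i (v i)
  have hc : ∀ k, 0 ≤ c k ∧ c k ≤ v k := by
    intro k
    rcases eq_or_ne k i with rfl | hk
    · simpa [c] using hv k
    · simpa [c, hk] using ⟨hu k, hv k⟩
  have hcR : ‖c‖ ≤ R := by
    refine (pi_norm_le_iff_of_nonneg ((norm_nonneg v).trans hvR)).2 fun k => ?_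
    rw [Real.norm_eq_abs, abs_of_nonneg (hc k).1]
    exact (hc k).2.trans ((le_abs_self _).trans ((norm_le_pi_norm v k).trans hvR))
  have huc : ‖u - c‖ ≤ b := by
    refine (pi_norm_le_iff_of_nonneg (by linarith [hb i])).2 fun k => ?_
    rcases eq_or_ne k i with rfl | hk
    · simpa [c, abs_of_nonneg (sub_nonneg.2 hvu)] using hb k
    · simp only [c, Pi.sub_apply, update_of_ne hk, Pi.inf_apply, Real.norm_eq_abs]
      rw [abs_of_nonneg (sub_nonneg.2 inf_le_left)]
      rcases min_cases (u k) (v k) with ⟨h, -⟩ | ⟨h, -⟩ <;> rw [h]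
      · linarith [hb i]
      · exact hb k
  have hcv : g c ≤ g v := hcoop c v (fun k => (hc k).1) (fun k => (hc k).2) (by simp [c])
  calc g u - g v ≤ |g u - g c| := by linarith [le_abs_self (g u - g c)]
    _ ≤ L * ‖u - c‖ := hlip u c hu (fun k => (hc k).1) huR hcR
    _ ≤ L * b := by gcongr

theorem setIntegral_mul_sub_le {α : Type*} [MeasurableSpace α] {μ : Measure α} {s : Set α}
    (hs : MeasurableSet s) {J u v : α → ℝ} {b M : ℝ} (hb : 0 ≤ b) (hJ : ∀ y, 0 ≤ J y)
    (hJ1 : ∫ y, J y ∂μ = 1) (hu : AEStronglyMeasurable u (μ.restrict s))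
    (hv : AEStronglyMeasurable v (μ.restrict s)) (huM : ∀ y ∈ s, |u y| ≤ M)
    (hvM : ∀ y ∈ s, |v y| ≤ M) (huv : ∀ y ∈ s, u y - v y ≤ b) :
    ∫ y in s, J y * u y ∂μ - ∫ y in s, J y * v y ∂μ ≤ b := by
  have hJint : Integrable J μ := .of_integral_ne_zero (by simp [hJ1])
  have hJu := hJint.integrableOn.mul_bdd hu (ae_restrict_of_forall_mem hs huM)
  have hJv := hJint.integrableOn.mul_bdd hv (ae_restrict_of_forall_mem hs hvM)
  have hJs : ∫ y in s, J y ∂μ ≤ 1 :=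
    hJ1 ▸ setIntegral_le_integral hJint (Eventually.of_forall hJ)
  rw [← integral_sub hJu hJv]
  calc ∫ y in s, J y * u y - J y * v y ∂μ ≤ ∫ y in s, J y * b ∂μ :=
        setIntegral_mono_on (hJu.sub hJv) (hJint.integrableOn.mul_const b) hs fun y hy => by
          nlinarith [hJ y, huv y hy]
    _ = (∫ y in s, J y ∂μ) * b := integral_mul_const b _
    _ ≤ b := by nlinarith

theorem eventually_forall_abs_le {ι α β : Type*} [Finite ι] {u : ι → α → β → ℝ} {s : Set α}
    {t : Set β} (h : ∀ i, ∃ M, ∀ x ∈ s, ∀ y ∈ t, |u i x y| ≤ M) :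
    ∀ᶠ M in atTop, ∀ i, ∀ x ∈ s, ∀ y ∈ t, |u i x y| ≤ M :=
  eventually_all.2 fun i => (h i).elim fun M hM =>
    eventually_atTop.2 ⟨M, fun _ hM' x hx y hy => (hM x hx y hy).trans hM'⟩

theorem sub_deriv_le_of_forall_sub_le {N m : ℕ} {Ω : Set (Fin N → ℝ)} (hΩ : MeasurableSet Ω)
    {d : Fin m → ℝ} {J : Fin m → (Fin N → ℝ) → (Fin N → ℝ) → ℝ}
    {dstar : Fin m → (Fin N → ℝ) → ℝ} {f : Fin m → (Fin N → ℝ) → ℝ → (Fin m → ℝ) → ℝ}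
    {ub ubt lb lbt : Fin m → (Fin N → ℝ) → ℝ → ℝ} {i : Fin m} {x : Fin N → ℝ} {t L M b : ℝ}
    (hd : 0 ≤ d i) (hJnn : ∀ y, 0 ≤ J i x y) (hJint : ∫ y, J i x y = 1)
    (hdstar : 0 ≤ dstar i x) (hL : 0 ≤ L)
    (hlip : ∀ v w : Fin m → ℝ, 0 ≤ v → 0 ≤ w → ‖v‖ ≤ M → ‖w‖ ≤ M →
      |f i x t v - f i x t w| ≤ L * ‖v - w‖)
    (hcoop : ∀ v w : Fin m → ℝ, 0 ≤ v → v ≤ w → v i = w i → f i x t v ≤ f i x t w)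
    (hubmeas : Measurable (uncurry (ub i))) (hlbmeas : Measurable (uncurry (lb i)))
    (hx : x ∈ closure Ω) (hMu : ∀ k, ∀ y ∈ closure Ω, |ub k y t| ≤ M)
    (hMl : ∀ k, ∀ y ∈ closure Ω, |lb k y t| ≤ M)
    (hubnn : ∀ k, 0 ≤ ub k x t) (hlbnn : ∀ k, 0 ≤ lb k x t)
    (hubineq : d i * (∫ y in Ω, J i x y * ub i y t) - dstar i x * ub i x t
        + f i x t (fun k => ub k x t) ≤ ubt i x t)
    (hlbineq : lbt i x t ≤ d i * (∫ y in Ω, J i x y * lb i y t) - dstar i x * lb i x t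
        + f i x t (fun k => lb k x t))
    (hb : ∀ k, ∀ y ∈ closure Ω, lb k y t - ub k y t ≤ b) (hi : ub i x t ≤ lb i x t) :
    lbt i x t - ubt i x t ≤ (d i + L) * b := by
  have hb0 : 0 ≤ b := (sub_nonneg.2 hi).trans (hb i x hx)
  have hnorm : ∀ u : Fin m → (Fin N → ℝ) → ℝ → ℝ, (∀ k, ∀ y ∈ closure Ω, |u k y t| ≤ M) →
      ‖fun k => u k x t‖ ≤ M := fun u hu =>
    (pi_norm_le_iff_of_nonneg ((abs_nonneg _).trans (hu i x hx))).2 fun k =>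
      (hu k x hx).trans_eq' rfl
  have hnonlocal := setIntegral_mul_sub_le (μ := volume) hΩ hb0 hJnn hJint
    hlbmeas.of_uncurry_right.aestronglyMeasurable hubmeas.of_uncurry_right.aestronglyMeasurable
    (fun y hy => hMl i y (subset_closure hy)) (fun y hy => hMu i y (subset_closure hy))
    (fun y hy => hb i y (subset_closure hy))
  have hreaction := sub_le_of_cooperative hL hlip hcoop hlbnn hubnn (hnorm lb hMl) (hnorm ub hMu)
    hi (fun k => hb k x hx)
  nlinarith [mul_le_mul_of_nonneg_left hnonlocal hd, mul_nonneg hdstar (sub_nonneg.2 hi)]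

theorem stmt_4_general {N m : ℕ} (Ω : Set (Fin N → ℝ))
    (hΩopen : IsOpen Ω)
    (T : ℝ)
    (d : Fin m → ℝ) (hd : ∀ i, 0 < d i)
    -- each kernel Jᵢ satisfies condition (J)
    (J : Fin m → (Fin N → ℝ) → (Fin N → ℝ) → ℝ)
    (hJnn : ∀ i x y, 0 ≤ J i x y)
    (hJint : ∀ i x, (∫ y, J i x y) = 1)
    -- condition (D)
    (dstar : Fin m → (Fin N → ℝ) → ℝ)
    (hdstar : ∀ i, (∀ x, dstar i x = d i) ∨ (∀ x, dstar i x = d i * ∫ y in Ω, J i y x))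
    -- f : continuous, locally Lipschitz in u uniformly in (x,t), cooperative
    (f : Fin m → (Fin N → ℝ) → ℝ → (Fin m → ℝ) → ℝ)
    (hflip : ∀ R > (0:ℝ), ∃ L : ℝ, ∀ x ∈ closure Ω, ∀ t ∈ Icc (0:ℝ) T,
      ∀ v w : Fin m → ℝ, 0 ≤ v → 0 ≤ w → ‖v‖ ≤ R → ‖w‖ ≤ R →
        ∀ i, |f i x t v - f i x t w| ≤ L * ‖v - w‖)
    (hfcoop : ∀ i, ∀ x ∈ closure Ω, ∀ t ∈ Icc (0:ℝ) T, ∀ v w : Fin m → ℝ,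
      0 ≤ v → v ≤ w → v i = w i → f i x t v ≤ f i x t w)
    -- ū, u̲ ∈ Z^m, nonnegative
    (ub ubt lb lbt : Fin m → (Fin N → ℝ) → ℝ → ℝ)
    (hubmeas : ∀ i, Measurable (Function.uncurry (ub i)))
    (hubbdd : ∀ i, ∃ M : ℝ, ∀ x ∈ closure Ω, ∀ t ∈ Icc (0:ℝ) T, |ub i x t| ≤ M)
    (hubderiv : ∀ i, ∀ x ∈ closure Ω, ∀ t ∈ Icc (0:ℝ) T,
      HasDerivWithinAt (ub i x) (ubt i x t) (Icc (0:ℝ) T) t)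
    (hlbmeas : ∀ i, Measurable (Function.uncurry (lb i)))
    (hlbbdd : ∀ i, ∃ M : ℝ, ∀ x ∈ closure Ω, ∀ t ∈ Icc (0:ℝ) T, |lb i x t| ≤ M)
    (hlbderiv : ∀ i, ∀ x ∈ closure Ω, ∀ t ∈ Icc (0:ℝ) T,
      HasDerivWithinAt (lb i x) (lbt i x t) (Icc (0:ℝ) T) t)
    (hubnn : ∀ i, ∀ x ∈ closure Ω, ∀ t ∈ Icc (0:ℝ) T, 0 ≤ ub i x t)
    (hlbnn : ∀ i, ∀ x ∈ closure Ω, ∀ t ∈ Icc (0:ℝ) T, 0 ≤ lb i x t)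
    -- differential inequalities (3c.3) on Q_T
    (hubineq : ∀ i, ∀ x ∈ closure Ω, ∀ t ∈ Ioc (0:ℝ) T,
      d i * (∫ y in Ω, J i x y * ub i y t) - dstar i x * ub i x t
        + f i x t (fun k => ub k x t) ≤ ubt i x t)
    (hlbineq : ∀ i, ∀ x ∈ closure Ω, ∀ t ∈ Ioc (0:ℝ) T,
      lbt i x t ≤ d i * (∫ y in Ω, J i x y * lb i y t) - dstar i x * lb i x t
        + f i x t (fun k => lb k x t))
    -- ordered initial data
    (hinit : ∀ i, ∀ x ∈ closure Ω, lb i x 0 ≤ ub i x 0) :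
    ∀ i, ∀ x ∈ closure Ω, ∀ t ∈ Icc (0:ℝ) T, lb i x t ≤ ub i x t := by
  obtain ⟨M, hM0, hMu, hMl⟩ := ((eventually_gt_atTop 0).and
    ((eventually_forall_abs_le hubbdd).and (eventually_forall_abs_le hlbbdd))).exists
  obtain ⟨L, hL⟩ := hflip M hM0
  obtain ⟨c, hc0, hc⟩ : ∃ c, 0 ≤ c ∧ ∀ i, d i + max L 0 ≤ c :=
    ((eventually_ge_atTop 0).and (eventually_all.2 fun i => eventually_ge_atTop _)).exists
  have hrate : ∀ t ∈ Ioc 0 T, ∀ b,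
      (∀ p : Fin m × closure Ω, lb p.1 p.2 t - ub p.1 p.2 t ≤ b) →
      ∀ p : Fin m × closure Ω, 0 < lb p.1 p.2 t - ub p.1 p.2 t →
        lbt p.1 p.2 t - ubt p.1 p.2 t ≤ c * b := by
    rintro t ht b hb ⟨i, x, hx⟩ hpos
    have ht' : t ∈ Icc 0 T := Ioc_subset_Icc_self ht
    have hdstar0 : 0 ≤ dstar i x := by
      rcases hdstar i with h | h <;> rw [h x]
      exacts [(hd i).le, mul_nonneg (hd i).le (setIntegral_nonneg hΩopen.measurableSet
        fun y _ => hJnn i y x)]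
    refine (sub_deriv_le_of_forall_sub_le hΩopen.measurableSet (hd i).le (hJnn i x) (hJint i x)
      hdstar0 (le_max_right L 0) (fun v w hv hw hvM hwM => (hL x hx t ht' v w hv hw hvM hwM i).trans
        (mul_le_mul_of_nonneg_right (le_max_left L 0) (norm_nonneg _)))
      (hfcoop i x hx t ht') (hubmeas i) (hlbmeas i) hx (fun k y hy => hMu k y hy t ht')
      (fun k y hy => hMl k y hy t ht') (fun k => hubnn k x hx t ht') (fun k => hlbnn k x hx t ht')
      (hubineq i x hx t ht) (hlbineq i x hx t ht) (fun k y hy => hb (k, ⟨y, hy⟩))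
      (sub_nonneg.1 hpos.le)).trans (mul_le_mul_of_nonneg_right (hc i) ?_)
    exact hpos.le.trans (hb _)
  intro i x hx t ht
  refine sub_nonpos.1 (nonpos_of_deriv_le_mul_bound (B := 2 * M) hc0
    (fun p t ht => (hlbderiv _ _ p.2.2 t ht).sub (hubderiv _ _ p.2.2 t ht))
    (fun p t ht => ?_) (fun p => sub_nonpos.2 (hinit _ _ p.2.2)) hrate (i, ⟨x, hx⟩) t ht)
  rw [Pi.sub_apply]
  linarith [(abs_le.1 (hMl p.1 p.2 p.2.2 t ht)).2, (abs_le.1 (hMu p.1 p.2 p.2.2 t ht)).1]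

/-- comparison principle for cooperative nonlocal dispersal systems. -/
theorem stmt_4 {N m : ℕ} (Ω : Set (Fin N → ℝ)) (hΩne : Ω.Nonempty)
    (hΩopen : IsOpen Ω) (hΩbdd : Bornology.IsBounded Ω)
    (T : ℝ) (hT : 0 < T)
    (d : Fin m → ℝ) (hd : ∀ i, 0 < d i)
    -- each kernel Jᵢ satisfies condition (J)
    (J : Fin m → (Fin N → ℝ) → (Fin N → ℝ) → ℝ)
    (hJcont : ∀ i, Continuous (Function.uncurry (J i)))
    (hJnn : ∀ i x y, 0 ≤ J i x y)
    (hJdiag : ∀ i x, 0 < J i x x)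
    (hJint : ∀ i x, (∫ y, J i x y) = 1)
    -- condition (D)
    (dstar : Fin m → (Fin N → ℝ) → ℝ)
    (hdstar : ∀ i, (∀ x, dstar i x = d i) ∨ (∀ x, dstar i x = d i * ∫ y in Ω, J i y x))
    -- f : continuous, locally Lipschitz in u uniformly in (x,t), cooperative
    (f : Fin m → (Fin N → ℝ) → ℝ → (Fin m → ℝ) → ℝ)
    (hfcont : ∀ i, ContinuousOn
      (fun q : ((Fin N → ℝ) × ℝ) × (Fin m → ℝ) => f i q.1.1 q.1.2 q.2)
      ((closure Ω ×ˢ Icc (0:ℝ) T) ×ˢ {v : Fin m → ℝ | 0 ≤ v}))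
    (hflip : ∀ R > (0:ℝ), ∃ L : ℝ, ∀ x ∈ closure Ω, ∀ t ∈ Icc (0:ℝ) T,
      ∀ v w : Fin m → ℝ, 0 ≤ v → 0 ≤ w → ‖v‖ ≤ R → ‖w‖ ≤ R →
        ∀ i, |f i x t v - f i x t w| ≤ L * ‖v - w‖)
    (hfcoop : ∀ i, ∀ x ∈ closure Ω, ∀ t ∈ Icc (0:ℝ) T, ∀ v w : Fin m → ℝ,
      0 ≤ v → v ≤ w → v i = w i → f i x t v ≤ f i x t w)
    -- ū, u̲ ∈ Z^m, nonnegative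
    (ub ubt lb lbt : Fin m → (Fin N → ℝ) → ℝ → ℝ)
    (hubmeas : ∀ i, Measurable (Function.uncurry (ub i)))
    (hubbdd : ∀ i, ∃ M : ℝ, ∀ x ∈ closure Ω, ∀ t ∈ Icc (0:ℝ) T, |ub i x t| ≤ M)
    (hubderiv : ∀ i, ∀ x ∈ closure Ω, ∀ t ∈ Icc (0:ℝ) T,
      HasDerivWithinAt (ub i x) (ubt i x t) (Icc (0:ℝ) T) t)
    (hubtcont : ∀ i, ∀ x ∈ closure Ω, ContinuousOn (ubt i x) (Icc (0:ℝ) T))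
    (hlbmeas : ∀ i, Measurable (Function.uncurry (lb i)))
    (hlbbdd : ∀ i, ∃ M : ℝ, ∀ x ∈ closure Ω, ∀ t ∈ Icc (0:ℝ) T, |lb i x t| ≤ M)
    (hlbderiv : ∀ i, ∀ x ∈ closure Ω, ∀ t ∈ Icc (0:ℝ) T,
      HasDerivWithinAt (lb i x) (lbt i x t) (Icc (0:ℝ) T) t)
    (hlbtcont : ∀ i, ∀ x ∈ closure Ω, ContinuousOn (lbt i x) (Icc (0:ℝ) T))
    (hubnn : ∀ i, ∀ x ∈ closure Ω, ∀ t ∈ Icc (0:ℝ) T, 0 ≤ ub i x t)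
    (hlbnn : ∀ i, ∀ x ∈ closure Ω, ∀ t ∈ Icc (0:ℝ) T, 0 ≤ lb i x t)
    -- differential inequalities (3c.3) on Q_T
    (hubineq : ∀ i, ∀ x ∈ closure Ω, ∀ t ∈ Ioc (0:ℝ) T,
      d i * (∫ y in Ω, J i x y * ub i y t) - dstar i x * ub i x t
        + f i x t (fun k => ub k x t) ≤ ubt i x t)
    (hlbineq : ∀ i, ∀ x ∈ closure Ω, ∀ t ∈ Ioc (0:ℝ) T,
      lbt i x t ≤ d i * (∫ y in Ω, J i x y * lb i y t) - dstar i x * lb i x t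
        + f i x t (fun k => lb k x t))
    -- ordered initial data
    (hinit : ∀ i, ∀ x ∈ closure Ω, lb i x 0 ≤ ub i x 0) :
    ∀ i, ∀ x ∈ closure Ω, ∀ t ∈ Icc (0:ℝ) T, lb i x t ≤ ub i x t :=
  stmt_4_general Ω hΩopen T d hd J hJnn hJint dstar hdstar f hflip hfcoop ub ubt lb lbt hubmeas
    hubbdd hubderiv hlbmeas hlbbdd hlbderiv hubnn hlbnn hubineq hlbineq hinit
end

section
/- For i = 1,…,m let d_i > 0, let J_i satisfy (J), and let d*_i be as in (D). Let p_ik : Q̄_T → ℝ (1 ≤ i,k ≤ m) be bounded and measurable with p_ik ≥ 0 on Q̄_T whenever i ≠ k. Suppose U ∈ Z^m satisfies U ≥ 0 on Q̄_T and, for every i and every (x,t) ∈ Q̄_T, the strict inequality ∂_t U_i(x,t) > d_i ∫_Ω J_i(x,y) U_i(y,t) dy − d*_i(x) U_i(x,t) + Σ_{k=1}^m p_ik(x,t) U_k(x,t), together with U_i(x,0) ≥ U_i(x,T) for all x ∈ Ω̄. Then for every i, U_i(x,t) > 0 for all (x,t) ∈ Q̄_T and inf_{(x,t) ∈ Q_T}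 U_i(x,t) > 0. -/
open MeasureTheory Set Function Real

/-!
Fix a component `i` and a point `x`. Cooperativity and the boundedness of `d*ᵢ` and `pᵢᵢ` turn the
system into the scalar inequality `f' > δ - C f` for `f = Uᵢ(x, ·)`, with `δ` a lower bound of the
nonlocal term `dᵢ ∫ Jᵢ(x,y) Uᵢ(y,t) dy` and `C` independent of `x`. Then `f e^{Ct} - δ t` is strictly
increasing, which together with `f T ≤ f 0` gives `f > 0`, and `f ≥ δ T / ((e^{CT} - 1) e^{CT})`.
Taking `δ = 0` yields positivity of `Uᵢ`; this makes the nonlocal term a continuous positive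
function on the compact set `Ω̄ × [0,T]` (positive since `Jᵢ(x,x) > 0`), hence bounded below by some
`δ > 0`, and the second bound is uniform.
-/

section PeriodicSupersolution

variable {f f' : ℝ → ℝ} {T C δ : ℝ}

theorem strictMonoOn_mul_exp_sub_mul (hC : 0 ≤ C) (hδ : 0 ≤ δ)
    (hf : ∀ t ∈ Icc 0 T, HasDerivWithinAt f (f' t) (Icc 0 T) t)
    (hineq : ∀ t ∈ Icc 0 T, δ - C * f t < f' t) :
    StrictMonoOn (fun t => f t * exp (C * t) - δ * t) (Icc 0 T) := by
  have hderiv : ∀ t ∈ Icc 0 T, HasDerivWithinAt (fun t => f t * exp (C * t) - δ * t)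
      ((f' t + C * f t) * exp (C * t) - δ) (Icc 0 T) t := fun t ht => by
    exact (((hf t ht).mul (hasDerivAt_const_mul C).exp.hasDerivWithinAt).sub
      (hasDerivAt_const_mul δ).hasDerivWithinAt).congr_deriv (by ring)
  refine strictMonoOn_of_hasDerivWithinAt_pos (convex_Icc 0 T)
    (fun t ht => (hderiv t ht).continuousWithinAt)
    (fun t ht => (hderiv t (interior_subset ht)).mono interior_subset) fun t ht => ?_
  rw [interior_Icc] at ht
  have hexp : 1 ≤ exp (C * t) := one_le_exp (mul_nonneg hC ht.1.le)
  nlinarith [hineq t (Ioo_subset_Icc_self ht)]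

theorem periodic_supersolution_bounds (hT : 0 < T) (hC : 0 ≤ C) (hδ : 0 ≤ δ)
    (hf : ∀ t ∈ Icc 0 T, HasDerivWithinAt f (f' t) (Icc 0 T) t)
    (hineq : ∀ t ∈ Icc 0 T, δ - C * f t < f' t) (hper : f T ≤ f 0) :
    δ * T < f T * (exp (C * T) - 1) ∧ ∀ t ∈ Icc 0 T, f T ≤ f t * exp (C * t) := by
  have hmono := strictMonoOn_mul_exp_sub_mul hC hδ hf hineq
  have h0 : (0 : ℝ) ∈ Icc 0 T := left_mem_Icc.2 hT.le
  refine ⟨?_, fun t ht => ?_⟩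
  · have := hmono h0 (right_mem_Icc.2 hT.le) hT
    simp only [mul_zero, exp_zero, mul_one, sub_zero] at this
    linarith
  · have := hmono.monotoneOn h0 ht ht.1
    simp only [mul_zero, exp_zero, mul_one, sub_zero] at this
    nlinarith [mul_nonneg hδ ht.1]

theorem pos_of_periodic_supersolution (hT : 0 < T) (hC : 0 ≤ C) (hδ : 0 ≤ δ)
    (hf : ∀ t ∈ Icc 0 T, HasDerivWithinAt f (f' t) (Icc 0 T) t)
    (hineq : ∀ t ∈ Icc 0 T, δ - C * f t < f' t) (hper : f T ≤ f 0) :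
    ∀ t ∈ Icc 0 T, 0 < f t := by
  obtain ⟨hlt, hle⟩ := periodic_supersolution_bounds hT hC hδ hf hineq hper
  have hexp : 0 ≤ exp (C * T) - 1 := sub_nonneg.2 (one_le_exp (mul_nonneg hC hT.le))
  have hfT : 0 < f T := by nlinarith [mul_nonneg hδ hT.le]
  exact fun t ht => pos_of_mul_pos_left (hfT.trans_le (hle t ht)) (exp_pos _).le

theorem div_div_exp_le_of_periodic_supersolution (hT : 0 < T) (hC : 0 < C) (hδ : 0 ≤ δ)
    (hf : ∀ t ∈ Icc 0 T, HasDerivWithinAt f (f' t) (Icc 0 T) t)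
    (hineq : ∀ t ∈ Icc 0 T, δ - C * f t < f' t) (hper : f T ≤ f 0) :
    ∀ t ∈ Icc 0 T, δ * T / (exp (C * T) - 1) / exp (C * T) ≤ f t := by
  intro t ht
  obtain ⟨hlt, hle⟩ := periodic_supersolution_bounds hT hC.le hδ hf hineq hper
  have hexp : 0 < exp (C * T) - 1 := sub_pos.2 (one_lt_exp_iff.2 (mul_pos hC hT))
  rw [div_le_iff₀ (exp_pos _)]
  calc δ * T / (exp (C * T) - 1) ≤ f T := (div_le_iff₀ hexp).2 hlt.le
    _ ≤ f t * exp (C * t) := hle t ht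
    _ ≤ f t * exp (C * T) :=
      mul_le_mul_of_nonneg_left (exp_le_exp.2 (mul_le_mul_of_nonneg_left ht.2 hC.le))
        (pos_of_periodic_supersolution hT hC.le hδ hf hineq hper t ht).le

end PeriodicSupersolution

theorem exists_pos_forall_sub_mul_lt {ι X : Type*} [Fintype ι] {K : Set X} {I : Set ℝ}
    {D : X → ℝ} {A v : X → ℝ → ℝ} {p u : ι → X → ℝ → ℝ} {i : ι}
    (hD : ∃ M, ∀ x ∈ K, D x ≤ M) (hp : ∃ M, ∀ x ∈ K, ∀ t ∈ I, |p i x t| ≤ M)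
    (hcoop : ∀ k ≠ i, ∀ x ∈ K, ∀ t ∈ I, 0 ≤ p k x t)
    (hu : ∀ k, ∀ x ∈ K, ∀ t ∈ I, 0 ≤ u k x t)
    (hineq : ∀ x ∈ K, ∀ t ∈ I, A x t - D x * u i x t + ∑ k, p k x t * u k x t < v x t) :
    ∃ C > 0, ∀ x ∈ K, ∀ t ∈ I, A x t - C * u i x t < v x t := by
  obtain ⟨MD, hMD⟩ := hD
  obtain ⟨Mp, hMp⟩ := hp
  refine ⟨max MD 0 + max Mp 0 + 1, by positivity, fun x hx t ht => ?_⟩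
  have hdiag : p i x t * u i x t ≤ ∑ k, p k x t * u k x t := by
    simpa using Finset.sum_le_sum_of_subset_of_nonneg (Finset.subset_univ {i}) fun k _ hk =>
      mul_nonneg (hcoop k (by simpa using hk) x hx t ht) (hu k x hx t ht)
  have hcoeff : D x - p i x t ≤ max MD 0 + max Mp 0 + 1 := by
    linarith [hMD x hx, le_max_left MD 0, le_max_left Mp 0, neg_le_of_abs_le (hMp x hx t ht)]
  nlinarith [hineq x hx t ht, mul_le_mul_of_nonneg_right hcoeff (hu i x hx t ht)]

section KernelIntegrals

variable {X : Type*} [MeasurableSpace X] {μ : Measure X}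

theorem continuousOn_setIntegral_of_abs_le {P : Type*} [TopologicalSpace P]
    [FirstCountableTopology P] {Ω : Set X} (hΩ : MeasurableSet Ω) (hμΩ : μ Ω < ⊤)
    {S : Set P} {g : P → X → ℝ} {M : ℝ}
    (hmeas : ∀ q ∈ S, AEStronglyMeasurable (g q) (μ.restrict Ω))
    (hbound : ∀ q ∈ S, ∀ y ∈ Ω, |g q y| ≤ M)
    (hcont : ∀ y ∈ Ω, ContinuousOn (fun q => g q y) S) :
    ContinuousOn (fun q => ∫ y in Ω, g q y ∂μ) S :=
  continuousOn_of_dominated hmeas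
    (fun q hq => (ae_restrict_iff' hΩ).2 (.of_forall (hbound q hq)))
    (integrableOn_const hμΩ.ne) ((ae_restrict_iff' hΩ).2 (.of_forall hcont))

theorem setIntegral_pos_of_pos_on_open [TopologicalSpace X] [OpensMeasurableSpace X]
    [μ.IsOpenPosMeasure] {Ω V : Set X} {g : X → ℝ} (hΩ : IsOpen Ω) (hV : IsOpen V)
    (hne : (V ∩ Ω).Nonempty) (hint : IntegrableOn g Ω μ) (hnn : ∀ y ∈ Ω, 0 ≤ g y)
    (hpos : ∀ y ∈ V ∩ Ω, 0 < g y) : 0 < ∫ y in Ω, g y ∂μ := by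
  rw [setIntegral_pos_iff_support_of_nonneg_ae
    ((ae_restrict_iff' hΩ.measurableSet).2 (.of_forall hnn)) hint]
  exact ((hV.inter hΩ).measure_pos μ hne).trans_le
    (measure_mono fun y hy => ⟨(hpos y hy).ne', hy.2⟩)

variable [MetricSpace X] [ProperSpace X] [IsFiniteMeasureOnCompacts μ]

theorem exists_forall_setIntegral_le {Ω : Set X} (hΩ : Bornology.IsBounded Ω)
    {J : X → X → ℝ} (hJ : Continuous (uncurry J)) :
    ∃ M, ∀ x ∈ closure Ω, ∫ y in Ω, J y x ∂μ ≤ M := by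
  have hK := hΩ.isCompact_closure
  obtain ⟨MJ, hMJ⟩ := (hK.prod hK).exists_bound_of_continuousOn hJ.continuousOn
  refine ⟨MJ * μ.real Ω, fun x hx => (le_abs_self _).trans ?_⟩
  exact norm_setIntegral_le_of_norm_le_const
    ((measure_mono subset_closure).trans_lt hK.measure_lt_top)
    fun y hy => hMJ (y, x) ⟨subset_closure hy, hx⟩

theorem exists_forall_le_of_condD {Ω : Set X} (hΩ : Bornology.IsBounded Ω)
    {J : X → X → ℝ} (hJ : Continuous (uncurry J)) {d : ℝ} (hd : 0 ≤ d) {dstar : X → ℝ}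
    (hdstar : (∀ x, dstar x = d) ∨ (∀ x, dstar x = d * ∫ y in Ω, J y x ∂μ)) :
    ∃ M, ∀ x ∈ closure Ω, dstar x ≤ M := by
  rcases hdstar with hconst | hint
  · exact ⟨d, fun x _ => (hconst x).le⟩
  · obtain ⟨M, hM⟩ := exists_forall_setIntegral_le (μ := μ) hΩ hJ
    exact ⟨d * M, fun x hx => (hint x).trans_le (mul_le_mul_of_nonneg_left (hM x hx) hd)⟩

theorem exists_pos_le_setIntegral_kernel_mul [BorelSpace X] [μ.IsOpenPosMeasure]
    {Ω : Set X} (hΩo : IsOpen Ω) (hΩb : Bornology.IsBounded Ω) {T : ℝ}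
    {J : X → X → ℝ} (hJc : Continuous (uncurry J)) (hJnn : ∀ x y, 0 ≤ J x y)
    (hJdiag : ∀ x, 0 < J x x) {u : X → ℝ → ℝ} (hum : Measurable (uncurry u))
    (hub : ∃ M, ∀ x ∈ closure Ω, ∀ t ∈ Icc 0 T, |u x t| ≤ M)
    (huc : ∀ x ∈ closure Ω, ContinuousOn (u x) (Icc 0 T))
    (hupos : ∀ x ∈ closure Ω, ∀ t ∈ Icc 0 T, 0 < u x t) :
    ∃ δ > 0, ∀ x ∈ closure Ω, ∀ t ∈ Icc 0 T, δ ≤ ∫ y in Ω, J x y * u y t ∂μ := by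
  have hK := hΩb.isCompact_closure
  have hμΩ : μ Ω < ⊤ := (measure_mono subset_closure).trans_lt hK.measure_lt_top
  obtain ⟨MJ, hMJ⟩ := (hK.prod hK).exists_bound_of_continuousOn hJc.continuousOn
  obtain ⟨MU, hMU⟩ := hub
  have hmeas : ∀ x t, AEStronglyMeasurable (fun y => J x y * u y t) (μ.restrict Ω) :=
    fun x t => ((hJc.comp (.prodMk_right x)).measurable.mul
      (hum.comp (measurable_id.prodMk measurable_const))).aestronglyMeasurable
  have hbound : ∀ q ∈ closure Ω ×ˢ Icc 0 T, ∀ y ∈ Ω, |J q.1 y * u y q.2| ≤ MJ * MU := by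
    intro q hq y hy
    have hJy : |J q.1 y| ≤ MJ := hMJ (q.1, y) ⟨hq.1, subset_closure hy⟩
    rw [abs_mul]
    exact mul_le_mul hJy (hMU y (subset_closure hy) q.2 hq.2) (abs_nonneg _)
      ((abs_nonneg _).trans hJy)
  have hcont : ContinuousOn (fun q : X × ℝ => ∫ y in Ω, J q.1 y * u y q.2 ∂μ)
      (closure Ω ×ˢ Icc 0 T) :=
    continuousOn_setIntegral_of_abs_le hΩo.measurableSet hμΩ (fun q _ => hmeas q.1 q.2) hbound
      fun y hy => (hJc.comp (continuous_fst.prodMk continuous_const)).continuousOn.mul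
        ((huc y (subset_closure hy)).comp continuous_snd.continuousOn fun q hq => hq.2)
  have hpos : ∀ q ∈ closure Ω ×ˢ Icc 0 T, 0 < ∫ y in Ω, J q.1 y * u y q.2 ∂μ := by
    rintro ⟨x, t⟩ ⟨hx, ht⟩
    have hV : IsOpen {y | 0 < J x y} := isOpen_lt continuous_const (hJc.comp (.prodMk_right x))
    exact setIntegral_pos_of_pos_on_open hΩo hV (mem_closure_iff.1 hx _ hV (hJdiag x))
      (IntegrableOn.of_bound hμΩ (hmeas x t) (MJ * MU)
        ((ae_restrict_iff' hΩo.measurableSet).2 (.of_forall (hbound (x, t) ⟨hx, ht⟩))))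
      (fun y hy => mul_nonneg (hJnn x y) (hupos y (subset_closure hy) t ht).le)
      (fun y hy => mul_pos hy.1 (hupos y (subset_closure hy.2) t ht))
  obtain ⟨δ, hδ, hδle⟩ := (hK.prod isCompact_Icc).exists_forall_le' hcont hpos
  exact ⟨δ, hδ, fun x hx t ht => hδle (x, t) ⟨hx, ht⟩⟩

end KernelIntegrals

theorem stmt_6_general {N m : ℕ} (Ω : Set (Fin N → ℝ))
    (hΩopen : IsOpen Ω) (hΩbdd : Bornology.IsBounded Ω)
    (T : ℝ) (hT : 0 < T)
    (d : Fin m → ℝ) (hd : ∀ i, 0 < d i)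
    -- each kernel Jᵢ satisfies condition (J)
    (J : Fin m → (Fin N → ℝ) → (Fin N → ℝ) → ℝ)
    (hJcont : ∀ i, Continuous (Function.uncurry (J i)))
    (hJnn : ∀ i x y, 0 ≤ J i x y)
    (hJdiag : ∀ i x, 0 < J i x x)
    -- condition (D)
    (dstar : Fin m → (Fin N → ℝ) → ℝ)
    (hdstar : ∀ i, (∀ x, dstar i x = d i) ∨ (∀ x, dstar i x = d i * ∫ y in Ω, J i y x))
    -- p_ik bounded, measurable, cooperative
    (p : Fin m → Fin m → (Fin N → ℝ) → ℝ → ℝ)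
    (hpbdd : ∀ i k, ∃ M : ℝ, ∀ x ∈ closure Ω, ∀ t ∈ Icc (0:ℝ) T, |p i k x t| ≤ M)
    (hpcoop : ∀ i k, i ≠ k → ∀ x ∈ closure Ω, ∀ t ∈ Icc (0:ℝ) T, 0 ≤ p i k x t)
    (U Ut : Fin m → (Fin N → ℝ) → ℝ → ℝ)
    (hUmeas : ∀ i, Measurable (Function.uncurry (U i)))
    (hUbdd : ∀ i, ∃ M : ℝ, ∀ x ∈ closure Ω, ∀ t ∈ Icc (0:ℝ) T, |U i x t| ≤ M)
    (hUderiv : ∀ i, ∀ x ∈ closure Ω, ∀ t ∈ Icc (0:ℝ) T,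
      HasDerivWithinAt (U i x) (Ut i x t) (Icc (0:ℝ) T) t)
    (hUnn : ∀ i, ∀ x ∈ closure Ω, ∀ t ∈ Icc (0:ℝ) T, 0 ≤ U i x t)
    -- strict differential inequality on Q̄_T and periodicity inequality
    (hineq : ∀ i, ∀ x ∈ closure Ω, ∀ t ∈ Icc (0:ℝ) T,
      d i * (∫ y in Ω, J i x y * U i y t) - dstar i x * U i x t
        + (∑ k, p i k x t * U k x t) < Ut i x t)
    (hper : ∀ i, ∀ x ∈ closure Ω, U i x T ≤ U i x 0) :
    ∀ i, (∀ x ∈ closure Ω, ∀ t ∈ Icc (0:ℝ) T, 0 < U i x t) ∧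
      ∃ c > 0, ∀ x ∈ closure Ω, ∀ t ∈ Ioc (0:ℝ) T, c ≤ U i x t := by
  intro i
  obtain ⟨C, hC, hlin⟩ := exists_pos_forall_sub_mul_lt
    (exists_forall_le_of_condD (μ := volume) hΩbdd (hJcont i) (hd i).le (hdstar i)) (hpbdd i i)
    (fun k hk => hpcoop i k (Ne.symm hk)) hUnn (hineq i)
  have hpos : ∀ x ∈ closure Ω, ∀ t ∈ Icc (0:ℝ) T, 0 < U i x t := fun x hx =>
    pos_of_periodic_supersolution hT hC.le le_rfl (hUderiv i x hx) (fun t ht => by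
      have hint : 0 ≤ ∫ y in Ω, J i x y * U i y t := setIntegral_nonneg hΩopen.measurableSet
        fun y hy => mul_nonneg (hJnn i x y) (hUnn i y (subset_closure hy) t ht)
      linarith [hlin x hx t ht, mul_nonneg (hd i).le hint]) (hper i x hx)
  obtain ⟨δ, hδ, hδle⟩ := exists_pos_le_setIntegral_kernel_mul (μ := volume) hΩopen hΩbdd (hJcont i) (hJnn i)
    (hJdiag i) (hUmeas i) (hUbdd i)
    (fun x hx t ht => (hUderiv i x hx t ht).continuousWithinAt) hpos
  have hexp : 0 < exp (C * T) - 1 := sub_pos.2 (one_lt_exp_iff.2 (mul_pos hC hT))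
  refine ⟨hpos, d i * δ * T / (exp (C * T) - 1) / exp (C * T),
    div_pos (div_pos (by positivity [hd i]) hexp) (exp_pos _), fun x hx t ht => ?_⟩
  refine div_div_exp_le_of_periodic_supersolution hT hC (mul_pos (hd i) hδ).le (hUderiv i x hx)
    (fun s hs => ?_) (hper i x hx) t (Ioc_subset_Icc_self ht)
  linarith [hlin x hx s hs, mul_le_mul_of_nonneg_left (hδle x hx s hs) (hd i).le]

/-- strict differential inequality on all of `Q̄_T` forces every
component to be positive on `Q̄_T` with positive infimum over `Q_T`. -/
theorem stmt_6 {N m : ℕ} (Ω : Set (Fin N → ℝ)) (hΩne : Ω.Nonempty)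
    (hΩopen : IsOpen Ω) (hΩbdd : Bornology.IsBounded Ω)
    (T : ℝ) (hT : 0 < T)
    (d : Fin m → ℝ) (hd : ∀ i, 0 < d i)
    -- each kernel Jᵢ satisfies condition (J)
    (J : Fin m → (Fin N → ℝ) → (Fin N → ℝ) → ℝ)
    (hJcont : ∀ i, Continuous (Function.uncurry (J i)))
    (hJnn : ∀ i x y, 0 ≤ J i x y)
    (hJdiag : ∀ i x, 0 < J i x x)
    (hJint : ∀ i x, (∫ y, J i x y) = 1)
    -- condition (D)
    (dstar : Fin m → (Fin N → ℝ) → ℝ)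
    (hdstar : ∀ i, (∀ x, dstar i x = d i) ∨ (∀ x, dstar i x = d i * ∫ y in Ω, J i y x))
    -- p_ik bounded, measurable, cooperative
    (p : Fin m → Fin m → (Fin N → ℝ) → ℝ → ℝ)
    (hpmeas : ∀ i k, Measurable (Function.uncurry (p i k)))
    (hpbdd : ∀ i k, ∃ M : ℝ, ∀ x ∈ closure Ω, ∀ t ∈ Icc (0:ℝ) T, |p i k x t| ≤ M)
    (hpcoop : ∀ i k, i ≠ k → ∀ x ∈ closure Ω, ∀ t ∈ Icc (0:ℝ) T, 0 ≤ p i k x t)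
    (U Ut : Fin m → (Fin N → ℝ) → ℝ → ℝ)
    (hUmeas : ∀ i, Measurable (Function.uncurry (U i)))
    (hUbdd : ∀ i, ∃ M : ℝ, ∀ x ∈ closure Ω, ∀ t ∈ Icc (0:ℝ) T, |U i x t| ≤ M)
    (hUderiv : ∀ i, ∀ x ∈ closure Ω, ∀ t ∈ Icc (0:ℝ) T,
      HasDerivWithinAt (U i x) (Ut i x t) (Icc (0:ℝ) T) t)
    (hUtcont : ∀ i, ∀ x ∈ closure Ω, ContinuousOn (Ut i x) (Icc (0:ℝ) T))
    (hUnn : ∀ i, ∀ x ∈ closure Ω, ∀ t ∈ Icc (0:ℝ) T, 0 ≤ U i x t)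
    -- strict differential inequality on Q̄_T and periodicity inequality
    (hineq : ∀ i, ∀ x ∈ closure Ω, ∀ t ∈ Icc (0:ℝ) T,
      d i * (∫ y in Ω, J i x y * U i y t) - dstar i x * U i x t
        + (∑ k, p i k x t * U k x t) < Ut i x t)
    (hper : ∀ i, ∀ x ∈ closure Ω, U i x T ≤ U i x 0) :
    ∀ i, (∀ x ∈ closure Ω, ∀ t ∈ Icc (0:ℝ) T, 0 < U i x t) ∧
      ∃ c > 0, ∀ x ∈ closure Ω, ∀ t ∈ Ioc (0:ℝ) T, c ≤ U i x t :=
  stmt_6_general Ω hΩopen hΩbdd T hT d hd J hJcont hJnn hJdiag dstar hdstar p hpbdd hpcoop U Ut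
    hUmeas hUbdd hUderiv hUnn hineq hper
end

section
/- For i = 1,…,m let d_i > 0, let J_i satisfy (J), and let ℓ_ik ∈ C(Q̄_T) satisfy (L1). Let P be a bounded linear operator on C(Ω̄, ℝ^m) with the defining property: for every v₀ ∈ C(Ω̄, ℝ^m) there exists v : Q̄_T → ℝ^m, continuous and continuously differentiable in t, with ∂_t v_i(x,t) = d_i ∫_Ω J_i(x,y) v_i(y,t) dy + Σ_{k=1}^m ℓ_ik(x,t) v_k(x,t) for all x ∈ Ω̄, t ∈ (0,T], v(·,0) = v₀, and (P v₀)(x) = v(x,T) for all x. Suppose there exist β ∈ ℝ and φ ∈ X^m such that φ ≥ 0 on Q̄_T, φ(·,0) ≢ 0, 𝓛[φ] ≥ βφ on Q̄_T, and φ_i(x,T) ≥ φ_i(x,0) for all x ∈ Ω̄ and all i. Then the spectral radius r(P) = lim_{n→∞} ‖P^n‖^{1/n} (operator norm with respect to the sup norm on C(Ω̄, ℝ^m)) satisfies r(P) ≥ e^{βT}. -/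
open MeasureTheory Set Function Filter

open Topology

/-!
Maximum principle: if `∂ₜwᵢ ≥ dᵢ ∫_Ω Jᵢ(x,y) wᵢ(y,t) dy + ∑ₖ ℓᵢₖ wₖ` on `Ω̄ × (0,T]` and
`w(·,0) ≥ 0`, then `w ≥ 0`. At a spatial minimum of value `-δ < 0`, the conditions `ℓᵢₖ ≥ 0`
(`i ≠ k`) and `∫_Ω Jᵢ ≤ 1` bound the right-hand side below by `-C δ`, so `w + ε e^{(C+1)t}`
can never first touch zero. Consequently `P` is monotone, and comparing the solution issued
from `φ(·,0)` with the subsolution `e^{βt} φ` gives `e^{βT} φ(·,0) ≤ P φ(·,0)`. Iterating,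
`e^{nβT} φ(·,0) ≤ Pⁿ φ(·,0)`, so `‖Pⁿ‖ ≥ c e^{nβT}` for some `c > 0`; taking `n`-th roots
yields `r(P) ≥ e^{βT}`.
-/

instance BoundedContinuousFunction.instPosSMulMono {α β : Type*} [TopologicalSpace α]
    [NormedAddCommGroup β] [Lattice β] [NormedSpace ℝ β] [PosSMulMono ℝ β] :
    PosSMulMono ℝ (BoundedContinuousFunction α β) :=
  ⟨fun _ hc _ _ h x => smul_le_smul_of_nonneg_left (h x) hc⟩

theorem BoundedContinuousFunction.apply_apply_le_norm {α ι : Type*} [TopologicalSpace α]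
    [Fintype ι] (f : BoundedContinuousFunction α (ι → ℝ)) (x : α) (i : ι) : f x i ≤ ‖f‖ :=
  (le_abs_self _).trans ((norm_le_pi_norm (f x) i).trans (f.norm_coe_le_norm x))

theorem ContinuousLinearMap.pow_smul_le_pow_apply {E : Type*} [TopologicalSpace E]
    [AddCommGroup E] [PartialOrder E] [Module ℝ E] [PosSMulMono ℝ E] {P : E →L[ℝ] E}
    (hP : Monotone P) {c : ℝ} (hc : 0 ≤ c) {x : E} (hx : c • x ≤ P x) (n : ℕ) :
    c ^ n • x ≤ (P ^ n) x := by
  induction n with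
  | zero => simp
  | succ n ih =>
    calc c ^ (n + 1) • x = c ^ n • c • x := by rw [pow_succ, mul_smul]
      _ ≤ c ^ n • P x := smul_le_smul_of_nonneg_left hx (pow_nonneg hc n)
      _ = P (c ^ n • x) := (P.map_smul _ _).symm
      _ ≤ P ((P ^ n) x) := hP ih
      _ = (P ^ (n + 1)) x := by rw [pow_succ']; rfl

theorem le_of_mul_pow_le_of_tendsto_rpow {s : ℕ → ℝ} {q a r : ℝ} (hq : 0 < q) (ha : 0 ≤ a)
    (hs : ∀ n, q * a ^ n ≤ s n)
    (hr : Tendsto (fun n : ℕ => s n ^ (1 / (n : ℝ))) atTop (𝓝 r)) : a ≤ r := by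
  have hlim : Tendsto (fun n : ℕ => q ^ (1 / (n : ℝ)) * a) atTop (𝓝 a) := by
    simpa using ((Real.continuousAt_const_rpow hq.ne').tendsto.comp
      tendsto_one_div_atTop_nhds_zero_nat).mul_const a
  refine le_of_tendsto_of_tendsto hlim hr ?_
  filter_upwards [eventually_ne_atTop 0] with n hn
  calc q ^ (1 / (n : ℝ)) * a = (q * a ^ n) ^ (1 / (n : ℝ)) := by
        rw [Real.mul_rpow hq.le (pow_nonneg ha n), one_div, Real.pow_rpow_inv_natCast ha hn]
    _ ≤ s n ^ (1 / (n : ℝ)) := Real.rpow_le_rpow (by positivity) (hs n) (by positivity)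

theorem IsMinOn.hasDerivWithinAt_Icc_nonpos {f : ℝ → ℝ} {f' a b : ℝ} (hab : a < b)
    (hmin : IsMinOn f (Icc a b) b) (hf : HasDerivWithinAt f f' (Icc a b) b) : f' ≤ 0 := by
  have hcone : a - b ∈ posTangentConeAt (Icc a b) b :=
    sub_mem_posTangentConeAt_of_segment_subset ((segment_symm ℝ b a).trans_subset
      (segment_eq_Icc hab.le).subset)
  have := hmin.localize.hasFDerivWithinAt_nonneg hf.hasFDerivWithinAt hcone
  simp only [ContinuousLinearMap.toSpanSingleton_apply, smul_eq_mul] at this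
  nlinarith

theorem neg_le_setIntegral_mul {X : Type*} [MeasurableSpace X] {μ : Measure X} {s : Set X}
    (hs : MeasurableSet s) {g f : X → ℝ} {δ : ℝ} (hg0 : ∀ y ∈ s, 0 ≤ g y)
    (hg : IntegrableOn g s μ) (hg1 : ∫ y in s, g y ∂μ ≤ 1) (hδ : 0 ≤ δ)
    (hf : ∀ y ∈ s, -δ ≤ f y) : -δ ≤ ∫ y in s, g y * f y ∂μ := by
  by_cases hgf : IntegrableOn (fun y => g y * f y) s μ
  · calc -δ ≤ -δ * ∫ y in s, g y ∂μ := by nlinarith [setIntegral_nonneg (μ := μ) hs hg0]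
      _ = ∫ y in s, -δ * g y ∂μ := (integral_const_mul _ _).symm
      _ ≤ ∫ y in s, g y * f y ∂μ :=
        setIntegral_mono_on (hg.const_mul _) hgf hs fun y hy => by nlinarith [hg0 y hy, hf y hy]
  · rw [integral_undef hgf]
    linarith

theorem neg_mul_sum_le_sum_mul {ι : Type*} [Fintype ι] {a w : ι → ℝ} {i : ι} {δ : ℝ}
    (ha : ∀ k ≠ i, 0 ≤ a k) (hw : ∀ k, -δ ≤ w k) (hi : w i = -δ) :
    -(δ * ∑ k, a k) ≤ ∑ k, a k * w k := by
  have hterm : ∀ k, 0 ≤ a k * (w k + δ) := fun k => by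
    rcases eq_or_ne k i with rfl | hk
    · simp [hi]
    · exact mul_nonneg (ha k hk) (by linarith [hw k])
  have hsum := Finset.sum_nonneg fun k (_ : k ∈ Finset.univ) => hterm k
  simp only [mul_add, Finset.sum_add_distrib, ← Finset.sum_mul] at hsum
  linarith

section FirstTouching

variable {ι X : Type*} [Finite ι] [TopologicalSpace X] {K : Set X} {T : ℝ}

theorem exists_first_nonpos (hK : IsCompact K) {v : ι → X → ℝ → ℝ}
    (hv : ∀ i, ContinuousOn (fun q : X × ℝ => v i q.1 q.2) (K ×ˢ Icc 0 T))
    (h : ∃ i, ∃ x ∈ K, ∃ t ∈ Icc 0 T, v i x t ≤ 0) :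
    ∃ i, ∃ x ∈ K, ∃ t₀ ∈ Icc 0 T, v i x t₀ ≤ 0 ∧ ∀ j, ∀ y ∈ K, ∀ t ∈ Ico 0 t₀, 0 < v j y t := by
  set A := ⋃ i, (K ×ˢ Icc 0 T) ∩ (fun q : X × ℝ => v i q.1 q.2) ⁻¹' Iic 0
  have hA : IsCompact A := isCompact_iUnion fun i =>
    (hv i).lowerSemicontinuousOn.isCompact_inter_preimage_Iic (hK.prod isCompact_Icc) 0
  obtain ⟨i, x, hx, t, ht, hle⟩ := h
  obtain ⟨⟨x₀, t₀⟩, hq₀, hmin⟩ :=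
    hA.exists_isMinOn ⟨(x, t), mem_iUnion.2 ⟨i, ⟨hx, ht⟩, hle⟩⟩ continuous_snd.continuousOn
  obtain ⟨i₀, ⟨hx₀, ht₀⟩, hle₀⟩ := mem_iUnion.1 hq₀
  refine ⟨i₀, x₀, hx₀, t₀, ht₀, hle₀, fun j y hy t ht => ?_⟩
  by_contra! hjy
  have : (y, t) ∈ A := mem_iUnion.2 ⟨j, ⟨hy, ht.1, ht.2.le.trans ht₀.2⟩, hjy⟩
  exact (hmin this).not_gt ht.2

theorem pos_of_deriv_pos_at_zero_minimum (hK : IsCompact K) {v v' : ι → X → ℝ → ℝ}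
    (hv : ∀ i, ContinuousOn (fun q : X × ℝ => v i q.1 q.2) (K ×ˢ Icc 0 T))
    (hv' : ∀ i, ∀ x ∈ K, ∀ t ∈ Icc 0 T, HasDerivWithinAt (v i x) (v' i x t) (Icc 0 T) t)
    (h0 : ∀ i, ∀ x ∈ K, 0 < v i x 0)
    (hzero : ∀ t ∈ Ioc 0 T, ∀ i, ∀ x ∈ K,
      (∀ j, ∀ y ∈ K, 0 ≤ v j y t) → v i x t = 0 → 0 < v' i x t) :
    ∀ i, ∀ x ∈ K, ∀ t ∈ Icc 0 T, 0 < v i x t := by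
  by_contra! h
  obtain ⟨i, x, hx, t₀, ht₀, hle, hbefore⟩ := exists_first_nonpos hK hv h
  have ht₀pos : 0 < t₀ := ht₀.1.lt_of_ne fun h₀ => (h0 i x hx).not_ge (h₀ ▸ hle)
  have hclosure : t₀ ∈ closure (Ico 0 t₀) := by
    rw [closure_Ico ht₀pos.ne]
    exact right_mem_Icc.2 ht₀pos.le
  have hat : ∀ j, ∀ y ∈ K, 0 ≤ v j y t₀ := fun j y hy =>
    continuousWithinAt_const.closure_le hclosure
      ((((hv j).uncurry_left (f := v j) y hy) t₀ ht₀).mono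
        fun t ht => ⟨ht.1, ht.2.le.trans ht₀.2⟩)
      fun t ht => (hbefore j y hy t ht).le
  have hvx : v i x t₀ = 0 := le_antisymm hle (hat i x hx)
  have hmin : IsMinOn (v i x) (Icc 0 t₀) t₀ := fun t ht => show v i x t₀ ≤ v i x t by
    rcases ht.2.lt_or_eq with htt | rfl
    · exact hvx ▸ (hbefore i x hx t ⟨ht.1, htt⟩).le
    · exact le_rfl
  exact (hzero t₀ ⟨ht₀pos, ht₀.2⟩ i x hx hat hvx).not_ge
    (hmin.hasDerivWithinAt_Icc_nonpos ht₀pos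
      ((hv' i x hx t₀ ht₀).mono (Icc_subset_Icc_right ht₀.2)))

theorem nonneg_of_deriv_ge_at_minimum (hK : IsCompact K) {u u' : ι → X → ℝ → ℝ} {C : ℝ}
    (hu : ∀ i, ContinuousOn (fun q : X × ℝ => u i q.1 q.2) (K ×ˢ Icc 0 T))
    (hu' : ∀ i, ∀ x ∈ K, ∀ t ∈ Icc 0 T, HasDerivWithinAt (u i x) (u' i x t) (Icc 0 T) t)
    (hmin : ∀ t ∈ Ioc 0 T, ∀ δ > 0, ∀ i, ∀ x ∈ K,
      (∀ j, ∀ y ∈ K, -δ ≤ u j y t) → u i x t = -δ → -(C * δ) ≤ u' i x t)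
    (h0 : ∀ i, ∀ x ∈ K, 0 ≤ u i x 0) :
    ∀ i, ∀ x ∈ K, ∀ t ∈ Icc 0 T, 0 ≤ u i x t := by
  intro i x hx t ht
  refine le_of_forall_pos_lt_add fun ε hε => ?_
  -- the barrier grows at rate `C + 1`, faster than `u` can decrease at a minimum
  set b : ℝ → ℝ := fun s => ε * Real.exp ((C + 1) * (s - t))
  have hb : ∀ s, HasDerivAt b ((C + 1) * b s) s := fun s =>
    ((((hasDerivAt_id' s).sub_const t).const_mul (C + 1)).exp.const_mul ε).congr_deriv
      (by simp only [b]; ring)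
  have hbpos : ∀ s, 0 < b s := fun s => by positivity
  have hpos := pos_of_deriv_pos_at_zero_minimum (v := fun j y s => u j y s + b s)
    (v' := fun j y s => u' j y s + (C + 1) * b s) hK
    (fun j => (hu j).add (by fun_prop))
    (fun j y hy s hs => (hu' j y hy s hs).add (hb s).hasDerivWithinAt)
    (fun j y hy => by linarith [h0 j y hy, hbpos 0])
    (fun s hs j y hy hnn hzero => by
      have := hmin s hs (b s) (hbpos s) j y hy (fun k z hz => by linarith [hnn k z hz])
        (by linarith)
      nlinarith [hbpos s])
    i x hx t ht
  simpa [b] using hpos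

end FirstTouching

section NonlocalSystem

variable {X ι : Type*} [MeasurableSpace X] [Fintype ι] {μ : Measure X}
  {Ω : Set X} {T : ℝ} {d : ι → ℝ} {J : ι → X → X → ℝ} {ℓ : ι → ι → X → ℝ → ℝ}

-- In the notation of the paper, `nonlocalOp μ Ω d J ℓ w i = 𝓛ᵢ[w] + ∂ₜwᵢ`.
noncomputable def nonlocalOp (μ : Measure X) (Ω : Set X) (d : ι → ℝ) (J : ι → X → X → ℝ)
    (ℓ : ι → ι → X → ℝ → ℝ) (w : ι → X → ℝ → ℝ) (i : ι) (x : X) (t : ℝ) : ℝ :=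
  d i * (∫ y in Ω, J i x y * w i y t ∂μ) + ∑ k, ℓ i k x t * w k x t

theorem neg_mul_le_nonlocalOp (hΩ : MeasurableSet Ω) {w : ι → X → ℝ → ℝ} {i : ι} {x : X}
    {t δ : ℝ} (hd : 0 ≤ d i) (hJnn : ∀ y, 0 ≤ J i x y) (hJ : IntegrableOn (J i x) Ω μ)
    (hJ1 : ∫ y in Ω, J i x y ∂μ ≤ 1) (hℓ : ∀ k ≠ i, 0 ≤ ℓ i k x t) (hδ : 0 ≤ δ)
    (hwΩ : ∀ y ∈ Ω, -δ ≤ w i y t) (hw : ∀ k, -δ ≤ w k x t) (hi : w i x t = -δ) :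
    -((d i + ∑ k, ℓ i k x t) * δ) ≤ nonlocalOp μ Ω d J ℓ w i x t := by
  have hint := neg_le_setIntegral_mul hΩ (fun y _ => hJnn y) hJ hJ1 hδ hwΩ
  have hsum := neg_mul_sum_le_sum_mul hℓ hw hi
  unfold nonlocalOp
  nlinarith [mul_le_mul_of_nonneg_left hint hd]

theorem nonlocalOp_sub_mul {v φ : ι → X → ℝ → ℝ} {g : ℝ → ℝ} {i : ι} {x : X} {t : ℝ}
    (hv : IntegrableOn (fun y => J i x y * v i y t) Ω μ)
    (hφ : IntegrableOn (fun y => J i x y * φ i y t) Ω μ) :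
    nonlocalOp μ Ω d J ℓ (fun j y s => v j y s - g s * φ j y s) i x t =
      nonlocalOp μ Ω d J ℓ v i x t - g t * nonlocalOp μ Ω d J ℓ φ i x t := by
  have hint : ∫ y in Ω, J i x y * (v i y t - g t * φ i y t) ∂μ =
      ∫ y in Ω, J i x y * v i y t ∂μ - g t * ∫ y in Ω, J i x y * φ i y t ∂μ := by
    rw [← integral_const_mul, ← integral_sub hv (hφ.const_mul _)]
    congr 1; ext y; ring
  have hsum : ∑ k, ℓ i k x t * (v k x t - g t * φ k x t) =
      ∑ k, ℓ i k x t * v k x t - g t * ∑ k, ℓ i k x t * φ k x t := by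
    rw [Finset.mul_sum, ← Finset.sum_sub_distrib]
    congr 1; ext k; ring
  simp only [nonlocalOp, hint, hsum]
  ring

variable [TopologicalSpace X]

-- `coeff_nonneg` is condition (L1).
structure IsCooperativeSystem (μ : Measure X) (Ω : Set X) (T : ℝ) (d : ι → ℝ)
    (J : ι → X → X → ℝ) (ℓ : ι → ι → X → ℝ → ℝ) : Prop where
  measurableSet : MeasurableSet Ω
  isCompact_closure : IsCompact (closure Ω)
  diffusion_nonneg : ∀ i, 0 ≤ d i
  kernel_nonneg : ∀ i x y, 0 ≤ J i x y
  kernel_integrableOn : ∀ i x, IntegrableOn (J i x) Ω μ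
  setIntegral_kernel_le_one : ∀ i x, ∫ y in Ω, J i x y ∂μ ≤ 1
  continuousOn_coeff : ∀ i k, ContinuousOn (fun q : X × ℝ => ℓ i k q.1 q.2) (closure Ω ×ˢ Icc 0 T)
  coeff_nonneg : ∀ i k, i ≠ k → ∀ x ∈ closure Ω, ∀ t ∈ Icc 0 T, 0 ≤ ℓ i k x t

namespace IsCooperativeSystem

theorem exists_bound (hs : IsCooperativeSystem μ Ω T d J ℓ) :
    ∃ C, ∀ i, ∀ x ∈ closure Ω, ∀ t ∈ Icc 0 T, d i + ∑ k, ℓ i k x t ≤ C := by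
  have hbdd : ∀ i, BddAbove ((fun q : X × ℝ => d i + ∑ k, ℓ i k q.1 q.2) ''
      (closure Ω ×ˢ Icc 0 T)) := fun i =>
    (hs.isCompact_closure.prod isCompact_Icc).bddAbove_image
      (continuousOn_const.add (continuousOn_finsetSum _ fun k _ => hs.continuousOn_coeff i k))
  choose C hC using hbdd
  obtain ⟨M, hM⟩ := Finite.exists_le C
  exact ⟨M, fun i x hx t ht => (hC i ⟨(x, t), ⟨hx, ht⟩, rfl⟩).trans (hM i)⟩

theorem nonneg_of_nonlocalOp_le_deriv (hs : IsCooperativeSystem μ Ω T d J ℓ)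
    {w w' : ι → X → ℝ → ℝ}
    (hw : ∀ i, ContinuousOn (fun q : X × ℝ => w i q.1 q.2) (closure Ω ×ˢ Icc 0 T))
    (hw' : ∀ i, ∀ x ∈ closure Ω, ∀ t ∈ Icc 0 T, HasDerivWithinAt (w i x) (w' i x t) (Icc 0 T) t)
    (hLw : ∀ i, ∀ x ∈ closure Ω, ∀ t ∈ Ioc 0 T, nonlocalOp μ Ω d J ℓ w i x t ≤ w' i x t)
    (h0 : ∀ i, ∀ x ∈ closure Ω, 0 ≤ w i x 0) :
    ∀ i, ∀ x ∈ closure Ω, ∀ t ∈ Icc 0 T, 0 ≤ w i x t := by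
  obtain ⟨C, hC⟩ := hs.exists_bound
  refine nonneg_of_deriv_ge_at_minimum hs.isCompact_closure hw hw' (C := C) ?_ h0
  intro t ht δ hδ i x hx hmin hi
  have htI : t ∈ Icc 0 T := Ioc_subset_Icc_self ht
  calc -(C * δ) ≤ -((d i + ∑ k, ℓ i k x t) * δ) := by nlinarith [hC i x hx t htI]
    _ ≤ nonlocalOp μ Ω d J ℓ w i x t :=
      neg_mul_le_nonlocalOp hs.measurableSet (hs.diffusion_nonneg i) (hs.kernel_nonneg i x)
        (hs.kernel_integrableOn i x) (hs.setIntegral_kernel_le_one i x)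
        (fun k hk => hs.coeff_nonneg i k hk.symm x hx t htI) hδ.le
        (fun y hy => hmin i y (subset_closure hy)) (fun k => hmin k x hx) hi
    _ ≤ w' i x t := hLw i x hx t ht

theorem integrableOn_kernel_mul [OpensMeasurableSpace X] [T2Space X] [IsFiniteMeasureOnCompacts μ]
    (hK : IsCompact (closure Ω)) {g : X → X → ℝ} (hg : Continuous (uncurry g))
    {w : X → ℝ → ℝ} (hw : ContinuousOn (fun q : X × ℝ => w q.1 q.2) (closure Ω ×ˢ Icc 0 T))
    (x : X) {t : ℝ} (ht : t ∈ Icc 0 T) : IntegrableOn (fun y => g x y * w y t) Ω μ :=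
  (((hg.comp (continuous_const.prodMk continuous_id)).continuousOn.mul
    (hw.uncurry_right (f := w) t ht)).integrableOn_compact hK).mono_set subset_closure

theorem exp_mul_le_of_subsolution [OpensMeasurableSpace X] [T2Space X]
    [IsFiniteMeasureOnCompacts μ] (hs : IsCooperativeSystem μ Ω T d J ℓ)
    (hJ : ∀ i, Continuous (uncurry (J i))) {β : ℝ} {v v' φ φ' : ι → X → ℝ → ℝ}
    (hv : ∀ i, ContinuousOn (fun q : X × ℝ => v i q.1 q.2) (closure Ω ×ˢ Icc 0 T))
    (hv' : ∀ i, ∀ x ∈ closure Ω, ∀ t ∈ Icc 0 T, HasDerivWithinAt (v i x) (v' i x t) (Icc 0 T) t)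
    (hLv : ∀ i, ∀ x ∈ closure Ω, ∀ t ∈ Ioc 0 T, v' i x t = nonlocalOp μ Ω d J ℓ v i x t)
    (hφ : ∀ i, ContinuousOn (fun q : X × ℝ => φ i q.1 q.2) (closure Ω ×ˢ Icc 0 T))
    (hφ' : ∀ i, ∀ x ∈ closure Ω, ∀ t ∈ Icc 0 T, HasDerivWithinAt (φ i x) (φ' i x t) (Icc 0 T) t)
    (hLφ : ∀ i, ∀ x ∈ closure Ω, ∀ t ∈ Icc 0 T,
      β * φ i x t ≤ nonlocalOp μ Ω d J ℓ φ i x t - φ' i x t)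
    (h0 : ∀ i, ∀ x ∈ closure Ω, φ i x 0 ≤ v i x 0) :
    ∀ i, ∀ x ∈ closure Ω, ∀ t ∈ Icc 0 T, Real.exp (β * t) * φ i x t ≤ v i x t := by
  have hexp : ∀ t, HasDerivAt (fun s => Real.exp (β * s)) (β * Real.exp (β * t)) t := fun t =>
    ((hasDerivAt_id' t).const_mul β).exp.congr_deriv (by ring)
  have hnn := hs.nonneg_of_nonlocalOp_le_deriv
    (w := fun i x t => v i x t - Real.exp (β * t) * φ i x t)
    (w' := fun i x t => v' i x t - (β * Real.exp (β * t) * φ i x t + Real.exp (β * t) * φ' i x t))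
    (fun i => (hv i).sub
      ((by fun_prop : Continuous fun q : X × ℝ => Real.exp (β * q.2)).continuousOn.mul (hφ i)))
    (fun i x hx t ht => (hv' i x hx t ht).sub ((hexp t).hasDerivWithinAt.mul (hφ' i x hx t ht)))
    (fun i x hx t ht => by
      have htI := Ioc_subset_Icc_self ht
      rw [nonlocalOp_sub_mul (integrableOn_kernel_mul hs.isCompact_closure (hJ i) (hv i) x htI)
        (integrableOn_kernel_mul hs.isCompact_closure (hJ i) (hφ i) x htI), ← hLv i x hx t ht]
      nlinarith [mul_le_mul_of_nonneg_left (hLφ i x hx t htI) (Real.exp_pos (β * t)).le])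
    (fun i x hx => by simpa using h0 i x hx)
  exact fun i x hx t ht => sub_nonneg.1 (hnn i x hx t ht)

end IsCooperativeSystem

def IsSolutionMap (μ : Measure X) (Ω : Set X) (T : ℝ) (d : ι → ℝ) (J : ι → X → X → ℝ)
    (ℓ : ι → ι → X → ℝ → ℝ)
    (P : BoundedContinuousFunction (closure Ω) (ι → ℝ) →L[ℝ]
      BoundedContinuousFunction (closure Ω) (ι → ℝ)) : Prop :=
  ∀ v₀ : BoundedContinuousFunction (closure Ω) (ι → ℝ), ∃ v v' : ι → X → ℝ → ℝ,
    (∀ i, ContinuousOn (fun q : X × ℝ => v i q.1 q.2) (closure Ω ×ˢ Icc 0 T)) ∧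
    (∀ i, ∀ x ∈ closure Ω, ∀ t ∈ Icc 0 T, HasDerivWithinAt (v i x) (v' i x t) (Icc 0 T) t) ∧
    (∀ i, ∀ x ∈ closure Ω, ∀ t ∈ Ioc 0 T, v' i x t = nonlocalOp μ Ω d J ℓ v i x t) ∧
    (∀ x : closure Ω, ∀ i, v i x 0 = v₀ x i) ∧
    (∀ x : closure Ω, ∀ i, P v₀ x i = v i x T)

namespace IsSolutionMap

variable {P : BoundedContinuousFunction (closure Ω) (ι → ℝ) →L[ℝ]
  BoundedContinuousFunction (closure Ω) (ι → ℝ)}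

theorem monotone (hP : IsSolutionMap μ Ω T d J ℓ P) (hs : IsCooperativeSystem μ Ω T d J ℓ)
    (hT : 0 ≤ T) : Monotone P := by
  refine (monotone_iff_map_nonneg P).2 fun v₀ hv₀ x i => show (0 : ℝ) ≤ P v₀ x i from ?_
  obtain ⟨v, v', hv, hv', hLv, h0, hvT⟩ := hP v₀
  rw [hvT x i]
  exact hs.nonneg_of_nonlocalOp_le_deriv hv hv' (fun i x hx t ht => (hLv i x hx t ht).ge)
    (fun i x hx => (h0 ⟨x, hx⟩ i).symm ▸ hv₀ ⟨x, hx⟩ i) i x x.2 T (right_mem_Icc.2 hT)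

theorem exp_smul_le_apply [OpensMeasurableSpace X] [T2Space X] [IsFiniteMeasureOnCompacts μ]
    (hP : IsSolutionMap μ Ω T d J ℓ P) (hs : IsCooperativeSystem μ Ω T d J ℓ) (hT : 0 ≤ T)
    (hJ : ∀ i, Continuous (uncurry (J i))) {β : ℝ} {φ φ' : ι → X → ℝ → ℝ}
    (hφ : ∀ i, ContinuousOn (fun q : X × ℝ => φ i q.1 q.2) (closure Ω ×ˢ Icc 0 T))
    (hφ' : ∀ i, ∀ x ∈ closure Ω, ∀ t ∈ Icc 0 T, HasDerivWithinAt (φ i x) (φ' i x t) (Icc 0 T) t)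
    (hLφ : ∀ i, ∀ x ∈ closure Ω, ∀ t ∈ Icc 0 T,
      β * φ i x t ≤ nonlocalOp μ Ω d J ℓ φ i x t - φ' i x t)
    (hφT : ∀ i, ∀ x ∈ closure Ω, φ i x 0 ≤ φ i x T)
    {φ₀ : BoundedContinuousFunction (closure Ω) (ι → ℝ)} (hφ₀ : ∀ x i, φ₀ x i = φ i x 0) :
    Real.exp (β * T) • φ₀ ≤ P φ₀ := by
  intro x i
  obtain ⟨v, v', hv, hv', hLv, h0, hvT⟩ := hP φ₀
  have hcomp := hs.exp_mul_le_of_subsolution hJ hv hv' hLv hφ hφ' hLφ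
    (fun i x hx => by rw [h0 ⟨x, hx⟩ i, hφ₀]) i x x.2 T (right_mem_Icc.2 hT)
  calc (Real.exp (β * T) • φ₀) x i = Real.exp (β * T) * φ i x 0 := by simp [hφ₀]
    _ ≤ Real.exp (β * T) * φ i x T :=
      mul_le_mul_of_nonneg_left (hφT i x x.2) (Real.exp_pos _).le
    _ ≤ P φ₀ x i := hvT x i ▸ hcomp

end IsSolutionMap

end NonlocalSystem

theorem stmt_12_general {N m : ℕ} (Ω : Set (Fin N → ℝ))
    (hΩopen : IsOpen Ω) (hΩbdd : Bornology.IsBounded Ω)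
    (T : ℝ) (hT : 0 < T)
    (d : Fin m → ℝ) (hd : ∀ i, 0 < d i)
    -- each kernel Jᵢ satisfies condition (J)
    (J : Fin m → (Fin N → ℝ) → (Fin N → ℝ) → ℝ)
    (hJcont : ∀ i, Continuous (Function.uncurry (J i)))
    (hJnn : ∀ i x y, 0 ≤ J i x y)
    (hJint : ∀ i x, (∫ y, J i x y) = 1)
    -- coefficients ℓ_ik ∈ C(Q̄_T) satisfying (L1)
    (ℓ : Fin m → Fin m → (Fin N → ℝ) → ℝ → ℝ)
    (hℓcont : ∀ i k, ContinuousOn (fun q : (Fin N → ℝ) × ℝ => ℓ i k q.1 q.2)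
      (closure Ω ×ˢ Icc (0:ℝ) T))
    (hL1 : ∀ i k, i ≠ k → ∀ x ∈ closure Ω, ∀ t ∈ Icc (0:ℝ) T, 0 ≤ ℓ i k x t)
    -- P is the period-T solution map on C(Ω̄, ℝ^m) (with the sup norm)
    (P : BoundedContinuousFunction (↥(closure Ω)) (Fin m → ℝ) →L[ℝ] BoundedContinuousFunction (↥(closure Ω)) (Fin m → ℝ))
    (hP : ∀ v₀ : BoundedContinuousFunction (↥(closure Ω)) (Fin m → ℝ),
      ∃ v vt : Fin m → (Fin N → ℝ) → ℝ → ℝ,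
        (∀ i, ContinuousOn (fun q : (Fin N → ℝ) × ℝ => v i q.1 q.2)
          (closure Ω ×ˢ Icc (0:ℝ) T)) ∧
        (∀ i, ∀ x ∈ closure Ω, ∀ t ∈ Icc (0:ℝ) T,
          HasDerivWithinAt (v i x) (vt i x t) (Icc (0:ℝ) T) t) ∧
        (∀ i, ∀ x ∈ closure Ω, ContinuousOn (vt i x) (Icc (0:ℝ) T)) ∧
        (∀ i, ∀ x ∈ closure Ω, ∀ t ∈ Ioc (0:ℝ) T,
          vt i x t = d i * (∫ y in Ω, J i x y * v i y t)
            + ∑ k, ℓ i k x t * v k x t) ∧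
        (∀ x : ↥(closure Ω), ∀ i, v i (↑x) 0 = v₀ x i) ∧
        (∀ x : ↥(closure Ω), ∀ i, P v₀ x i = v i (↑x) T))
    -- the test function φ ∈ X^m and the number β
    (β : ℝ) (φ φt : Fin m → (Fin N → ℝ) → ℝ → ℝ)
    (hφcont : ∀ i, ContinuousOn (fun q : (Fin N → ℝ) × ℝ => φ i q.1 q.2)
      (closure Ω ×ˢ Icc (0:ℝ) T))
    (hφderiv : ∀ i, ∀ x ∈ closure Ω, ∀ t ∈ Icc (0:ℝ) T,
      HasDerivWithinAt (φ i x) (φt i x t) (Icc (0:ℝ) T) t)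
    (hφnn : ∀ i, ∀ x ∈ closure Ω, ∀ t ∈ Icc (0:ℝ) T, 0 ≤ φ i x t)
    (hφne : ∃ i, ∃ x ∈ closure Ω, φ i x 0 ≠ 0)
    -- 𝓛[φ] ≥ βφ on Q̄_T
    (hLφ : ∀ i, ∀ x ∈ closure Ω, ∀ t ∈ Icc (0:ℝ) T,
      β * φ i x t ≤ d i * (∫ y in Ω, J i x y * φ i y t)
        + (∑ k, ℓ i k x t * φ k x t) - φt i x t)
    (hφT : ∀ i, ∀ x ∈ closure Ω, φ i x 0 ≤ φ i x T) :
    ∀ r : ℝ,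
      Tendsto (fun n : ℕ => ‖P ^ n‖ ^ (1 / (n:ℝ))) atTop (nhds r) →
      Real.exp (β * T) ≤ r := by
  intro r hr
  have hK : IsCompact (closure Ω) := hΩbdd.isCompact_closure
  have : CompactSpace (closure Ω) := isCompact_iff_compactSpace.mp hK
  have hJ : ∀ i x, Integrable (J i x) := fun i x => .of_integral_ne_zero (by simp [hJint])
  have hs : IsCooperativeSystem volume Ω T d J ℓ :=
    ⟨hΩopen.measurableSet, hK, fun i => (hd i).le, hJnn, fun i x => (hJ i x).integrableOn,
      fun i x => hJint i x ▸ setIntegral_le_integral (hJ i x) (.of_forall (hJnn i x)),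
      hℓcont, hL1⟩
  have hPsol : IsSolutionMap volume Ω T d J ℓ P := fun v₀ =>
    let ⟨v, v', hv, hv', _, hLv, h0, hvT⟩ := hP v₀
    ⟨v, v', hv, hv', hLv, h0, hvT⟩
  let φ₀ : BoundedContinuousFunction (closure Ω) (Fin m → ℝ) :=
    .mkOfCompact ⟨fun x i => φ i x 0, continuous_pi fun i => (hφcont i).comp_continuous
      (continuous_subtype_val.prodMk continuous_const) fun x => ⟨x.2, left_mem_Icc.2 hT.le⟩⟩
  have hgrowth := ContinuousLinearMap.pow_smul_le_pow_apply (hPsol.monotone hs hT.le)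
    (Real.exp_pos _).le
    (hPsol.exp_smul_le_apply hs hT.le hJcont hφcont hφderiv hLφ hφT (φ₀ := φ₀) fun _ _ => rfl)
  obtain ⟨i₀, x₀, hx₀, hne⟩ := hφne
  have hc₀ : 0 < φ i₀ x₀ 0 := (hφnn i₀ x₀ hx₀ 0 (left_mem_Icc.2 hT.le)).lt_of_ne' hne
  have hφ₀ : 0 < ‖φ₀‖ := hc₀.trans_le (φ₀.apply_apply_le_norm ⟨x₀, hx₀⟩ i₀)
  refine le_of_mul_pow_le_of_tendsto_rpow (div_pos hc₀ hφ₀) (Real.exp_pos _).le (fun n => ?_) hr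
  rw [div_mul_eq_mul_div, div_le_iff₀ hφ₀]
  calc φ i₀ x₀ 0 * Real.exp (β * T) ^ n ≤ (P ^ n) φ₀ ⟨x₀, hx₀⟩ i₀ := by
        simpa [φ₀, mul_comm] using hgrowth n ⟨x₀, hx₀⟩ i₀
    _ ≤ ‖(P ^ n) φ₀‖ := ((P ^ n) φ₀).apply_apply_le_norm _ _
    _ ≤ ‖P ^ n‖ * ‖φ₀‖ := (P ^ n).le_opNorm φ₀

/-- lower bound `r(P) ≥ e^{βT}` for the spectral radius of the period map. -/
theorem stmt_12 {N m : ℕ} (Ω : Set (Fin N → ℝ)) (hΩne : Ω.Nonempty)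
    (hΩopen : IsOpen Ω) (hΩbdd : Bornology.IsBounded Ω)
    (T : ℝ) (hT : 0 < T)
    (d : Fin m → ℝ) (hd : ∀ i, 0 < d i)
    -- each kernel Jᵢ satisfies condition (J)
    (J : Fin m → (Fin N → ℝ) → (Fin N → ℝ) → ℝ)
    (hJcont : ∀ i, Continuous (Function.uncurry (J i)))
    (hJnn : ∀ i x y, 0 ≤ J i x y)
    (hJdiag : ∀ i x, 0 < J i x x)
    (hJint : ∀ i x, (∫ y, J i x y) = 1)
    -- coefficients ℓ_ik ∈ C(Q̄_T) satisfying (L1)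
    (ℓ : Fin m → Fin m → (Fin N → ℝ) → ℝ → ℝ)
    (hℓcont : ∀ i k, ContinuousOn (fun q : (Fin N → ℝ) × ℝ => ℓ i k q.1 q.2)
      (closure Ω ×ˢ Icc (0:ℝ) T))
    (hL1 : ∀ i k, i ≠ k → ∀ x ∈ closure Ω, ∀ t ∈ Icc (0:ℝ) T, 0 ≤ ℓ i k x t)
    -- P is the period-T solution map on C(Ω̄, ℝ^m) (with the sup norm)
    (P : BoundedContinuousFunction (↥(closure Ω)) (Fin m → ℝ) →L[ℝ] BoundedContinuousFunction (↥(closure Ω)) (Fin m → ℝ))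
    (hP : ∀ v₀ : BoundedContinuousFunction (↥(closure Ω)) (Fin m → ℝ),
      ∃ v vt : Fin m → (Fin N → ℝ) → ℝ → ℝ,
        (∀ i, ContinuousOn (fun q : (Fin N → ℝ) × ℝ => v i q.1 q.2)
          (closure Ω ×ˢ Icc (0:ℝ) T)) ∧
        (∀ i, ∀ x ∈ closure Ω, ∀ t ∈ Icc (0:ℝ) T,
          HasDerivWithinAt (v i x) (vt i x t) (Icc (0:ℝ) T) t) ∧
        (∀ i, ∀ x ∈ closure Ω, ContinuousOn (vt i x) (Icc (0:ℝ) T)) ∧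
        (∀ i, ∀ x ∈ closure Ω, ∀ t ∈ Ioc (0:ℝ) T,
          vt i x t = d i * (∫ y in Ω, J i x y * v i y t)
            + ∑ k, ℓ i k x t * v k x t) ∧
        (∀ x : ↥(closure Ω), ∀ i, v i (↑x) 0 = v₀ x i) ∧
        (∀ x : ↥(closure Ω), ∀ i, P v₀ x i = v i (↑x) T))
    -- the test function φ ∈ X^m and the number β
    (β : ℝ) (φ φt : Fin m → (Fin N → ℝ) → ℝ → ℝ)
    (hφcont : ∀ i, ContinuousOn (fun q : (Fin N → ℝ) × ℝ => φ i q.1 q.2)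
      (closure Ω ×ˢ Icc (0:ℝ) T))
    (hφderiv : ∀ i, ∀ x ∈ closure Ω, ∀ t ∈ Icc (0:ℝ) T,
      HasDerivWithinAt (φ i x) (φt i x t) (Icc (0:ℝ) T) t)
    (hφtcont : ∀ i, ∀ x ∈ closure Ω, ContinuousOn (φt i x) (Icc (0:ℝ) T))
    (hφnn : ∀ i, ∀ x ∈ closure Ω, ∀ t ∈ Icc (0:ℝ) T, 0 ≤ φ i x t)
    (hφne : ∃ i, ∃ x ∈ closure Ω, φ i x 0 ≠ 0)
    -- 𝓛[φ] ≥ βφ on Q̄_T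
    (hLφ : ∀ i, ∀ x ∈ closure Ω, ∀ t ∈ Icc (0:ℝ) T,
      β * φ i x t ≤ d i * (∫ y in Ω, J i x y * φ i y t)
        + (∑ k, ℓ i k x t * φ k x t) - φt i x t)
    (hφT : ∀ i, ∀ x ∈ closure Ω, φ i x 0 ≤ φ i x T) :
    ∀ r : ℝ,
      Tendsto (fun n : ℕ => ‖P ^ n‖ ^ (1 / (n:ℝ))) atTop (nhds r) →
      Real.exp (β * T) ≤ r :=
  stmt_12_general Ω hΩopen hΩbdd T hT d hd J hJcont hJnn hJint ℓ hℓcont hL1 P hP β φ φt hφcont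
    hφderiv hφnn hφne hLφ hφT
end

section
/- For i = 1,…,m let d_i > 0, let J_i satisfy (J), and let ℓ_ik ∈ C(Q̄_T) satisfy (L1). Let P be a bounded linear operator on C(Ω̄, ℝ^m) with the defining property: for every v₀ ∈ C(Ω̄, ℝ^m) there exists v : Q̄_T → ℝ^m, continuous and continuously differentiable in t, with ∂_t v_i(x,t) = d_i ∫_Ω J_i(x,y) v_i(y,t) dy + Σ_{k=1}^m ℓ_ik(x,t) v_k(x,t) for all x ∈ Ω̄, t ∈ (0,T], v(·,0) = v₀, and (P v₀)(x) = v(x,T) for all x. Suppose there exist β ∈ ℝ and φ ∈ X^m such that φ_i(x,t) > 0 for all (x,t) ∈ Q̄_T and all i, 𝓛[φ] ≤ βφ on Q̄_T, and φ_i(x,T) ≤ φ_i(x,0) for all x ∈ Ω̄ and all i. Then the spectral radius r(P) = lim_{n→∞} ‖P^n‖^{1/n} (operator norm with respect to the sup norm on C(Ω̄, ℝ^m)) satisfies r(P) ≤ e^{βT}. -/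
/-!
If `v` solves the system and `|v(·, 0)| ≤ K φ(·, 0)`, then for every `ε > 0` the function
`(K + ε) e^{(β + ε) t} φ` is a strict supersolution lying strictly above `±v` at `t = 0`. Since the
system is cooperative (`J ≥ 0`, `ℓ_ik ≥ 0` for `i ≠ k`), at a first time where `±v` touches it the
time derivative of the difference would have to be both `≥ 0` and `< 0`; hence `±v` stays below it.
Letting `ε → 0` and using `φ(·, T) ≤ φ(·, 0)` gives `|P u| ≤ K e^{βT} φ(·, 0)`. As `φ(·, 0)` is
bounded above and away from `0`, iterating yields `‖Pⁿ‖ ≤ C e^{nβT}`, so `r(P) ≤ e^{βT}`.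
-/

open MeasureTheory Set Function Filter Topology
open scoped BoundedContinuousFunction

theorem HasDerivWithinAt.nonneg_of_isMaxOn_Icc {f : ℝ → ℝ} {f' a b : ℝ}
    (hf : HasDerivWithinAt f f' (Icc a b) b) (hab : a < b) (hmax : IsMaxOn f (Icc a b) b) :
    0 ≤ f' := by
  have hcone : a - b ∈ posTangentConeAt (Icc a b) b :=
    sub_mem_posTangentConeAt_of_segment_subset (by rw [segment_symm, segment_eq_Icc hab.le])
  have h := hmax.localize.hasFDerivWithinAt_nonpos hf hcone
  rw [ContinuousLinearMap.toSpanSingleton_apply, smul_eq_mul] at h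
  nlinarith

structure HasTimeDerivOn {ι X : Type*} [TopologicalSpace X] (C : Set X) (T : ℝ)
    (u u' : ι → X → ℝ → ℝ) : Prop where
  continuousOn : ∀ i, ContinuousOn (uncurry (u i)) (C ×ˢ Icc 0 T)
  hasDerivWithinAt : ∀ i, ∀ x ∈ C, ∀ t ∈ Icc 0 T,
    HasDerivWithinAt (u i x) (u' i x t) (Icc 0 T) t

namespace HasTimeDerivOn

variable {ι X : Type*} [TopologicalSpace X] {C : Set X} {T : ℝ} {u u' v v' : ι → X → ℝ → ℝ}

theorem sub (hu : HasTimeDerivOn C T u u') (hv : HasTimeDerivOn C T v v') :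
    HasTimeDerivOn C T (fun i x t => u i x t - v i x t) (fun i x t => u' i x t - v' i x t) :=
  ⟨fun i => (hu.continuousOn i).sub (hv.continuousOn i),
    fun i x hx t ht => (hu.hasDerivWithinAt i x hx t ht).sub (hv.hasDerivWithinAt i x hx t ht)⟩

theorem neg (hu : HasTimeDerivOn C T u u') :
    HasTimeDerivOn C T (fun i x t => -u i x t) (fun i x t => -u' i x t) :=
  ⟨fun i => (hu.continuousOn i).neg, fun i x hx t ht => (hu.hasDerivWithinAt i x hx t ht).neg⟩

theorem const_mul_exp_mul (hu : HasTimeDerivOn C T u u') (a γ : ℝ) :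
    HasTimeDerivOn C T (fun i x t => a * Real.exp (γ * t) * u i x t)
      (fun i x t => a * (γ * Real.exp (γ * t) * u i x t + Real.exp (γ * t) * u' i x t)) := by
  refine ⟨fun i => ContinuousOn.mul (by fun_prop) (hu.continuousOn i), fun i x hx t ht => ?_⟩
  have hexp : HasDerivAt (fun s => a * Real.exp (γ * s)) (a * (Real.exp (γ * t) * (γ * 1))) t :=
    ((hasDerivAt_id' t).const_mul γ).exp.const_mul a
  exact (hexp.hasDerivWithinAt.mul (hu.hasDerivWithinAt i x hx t ht)).congr_deriv (by ring)

theorem continuousOn_slice (hu : HasTimeDerivOn C T u u') (i : ι) {t : ℝ} (ht : t ∈ Icc 0 T) :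
    ContinuousOn (fun x => u i x t) C :=
  (hu.continuousOn i).comp (continuousOn_id.prodMk continuousOn_const) fun _ hx => ⟨hx, ht⟩

end HasTimeDerivOn

theorem forall_neg_of_deriv_neg_at_zeros {ι X : Type*} [Finite ι] [TopologicalSpace X]
    {C : Set X} (hC : IsCompact C) {T : ℝ} {w w' : ι → X → ℝ → ℝ}
    (hw : HasTimeDerivOn C T w w') (h0 : ∀ i, ∀ x ∈ C, w i x 0 < 0)
    (hzero : ∀ t ∈ Ioc 0 T, (∀ i, ∀ x ∈ C, w i x t ≤ 0) →
      ∀ i, ∀ x ∈ C, w i x t = 0 → w' i x t < 0) :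
    ∀ i, ∀ x ∈ C, ∀ t ∈ Icc 0 T, w i x t < 0 := by
  by_contra! hbad
  obtain ⟨i₁, x₁, hx₁, t₁, ht₁, h₁⟩ := hbad
  set S := ⋃ i, (C ×ˢ Icc 0 T) ∩ uncurry (w i) ⁻¹' Ici 0
  have hS : IsCompact S := isCompact_iUnion fun i =>
    (hw.continuousOn i).upperSemicontinuousOn.isCompact_inter_preimage_Ici
      (hC.prod isCompact_Icc) 0
  -- `t₀` is the first time at which some component of `w` reaches `0`
  obtain ⟨⟨x₀, t₀⟩, hq₀, hfirst⟩ :=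
    hS.exists_isMinOn ⟨(x₁, t₁), mem_iUnion.2 ⟨i₁, ⟨hx₁, ht₁⟩, h₁⟩⟩ continuous_snd.continuousOn
  obtain ⟨i₀, ⟨hx₀, ht₀⟩, hi₀⟩ := mem_iUnion.1 hq₀
  have hbefore : ∀ s ∈ Ico 0 t₀, ∀ i, ∀ x ∈ C, w i x s < 0 := fun s hs i x hx => by
    by_contra! h
    exact (isMinOn_iff.1 hfirst (x, s)
      (mem_iUnion.2 ⟨i, ⟨hx, hs.1, hs.2.le.trans ht₀.2⟩, h⟩)).not_gt hs.2
  have ht₀pos : 0 < t₀ := ht₀.1.lt_of_ne fun h => (h0 i₀ x₀ hx₀).not_ge (h ▸ hi₀)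
  have hsub : Icc 0 t₀ ⊆ Icc 0 T := Icc_subset_Icc_right ht₀.2
  have hat : ∀ i, ∀ x ∈ C, w i x t₀ ≤ 0 := fun i x hx =>
    ((hw.hasDerivWithinAt i x hx t₀ ht₀).continuousWithinAt.mono
      (Ico_subset_Icc_self.trans hsub)).closure_le
      (by rw [closure_Ico ht₀pos.ne]; exact right_mem_Icc.2 ht₀pos.le) continuousWithinAt_const
      fun s hs => (hbefore s hs i x hx).le
  have hzero₀ : w i₀ x₀ t₀ = 0 := (hat i₀ x₀ hx₀).antisymm hi₀
  have hmax : IsMaxOn (w i₀ x₀) (Icc 0 t₀) t₀ := fun s hs => by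
    rcases hs.2.lt_or_eq with hlt | rfl
    · exact (hbefore s ⟨hs.1, hlt⟩ i₀ x₀ hx₀).le.trans hzero₀.ge
    · exact le_rfl (a := w i₀ x₀ s)
  exact ((hw.hasDerivWithinAt i₀ x₀ hx₀ t₀ ht₀).mono hsub |>.nonneg_of_isMaxOn_Icc ht₀pos
    hmax).not_gt (hzero t₀ ⟨ht₀pos, ht₀.2⟩ hat i₀ x₀ hx₀ hzero₀)

section NonlocalSystem

variable {ι X : Type*} [Fintype ι] [MeasurableSpace X]
  (μ : Measure X) (Ω : Set X) (d : ι → ℝ) (J : ι → X → X → ℝ) (ℓ : ι → ι → X → ℝ → ℝ)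

/-- The paper's `𝓛ᵢ[u](x, t)` is `nonlocalOperator μ Ω d J ℓ u i x t - ∂ₜ uᵢ(x, t)`. -/
noncomputable def nonlocalOperator (u : ι → X → ℝ → ℝ) (i : ι) (x : X) (t : ℝ) : ℝ :=
  d i * (∫ y in Ω, J i x y * u i y t ∂μ) + ∑ k, ℓ i k x t * u k x t

theorem nonlocalOperator_neg (u : ι → X → ℝ → ℝ) (i : ι) (x : X) (t : ℝ) :
    nonlocalOperator μ Ω d J ℓ (fun k y s => -u k y s) i x t =
      -nonlocalOperator μ Ω d J ℓ u i x t := by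
  simp only [nonlocalOperator, mul_neg, integral_neg, Finset.sum_neg_distrib]
  ring

theorem nonlocalOperator_time_mul (g : ℝ → ℝ) (u : ι → X → ℝ → ℝ) (i : ι) (x : X) (t : ℝ) :
    nonlocalOperator μ Ω d J ℓ (fun k y s => g s * u k y s) i x t =
      g t * nonlocalOperator μ Ω d J ℓ u i x t := by
  have hint : ∫ y in Ω, J i x y * (g t * u i y t) ∂μ = g t * ∫ y in Ω, J i x y * u i y t ∂μ := by
    rw [← integral_const_mul]
    congr 1 with y
    ring
  simp only [nonlocalOperator, hint, mul_add, Finset.mul_sum]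
  congr 1
  · ring
  · exact Finset.sum_congr rfl fun k _ => by ring

variable {μ Ω d J ℓ}

theorem nonlocalOperator_const_mul_exp_mul_lt {φ φ' : ι → X → ℝ → ℝ} {i : ι} {x : X} {t β γ a : ℝ}
    (hβγ : β < γ) (ha : 0 < a) (hφ : 0 < φ i x t)
    (hLφ : nonlocalOperator μ Ω d J ℓ φ i x t - φ' i x t ≤ β * φ i x t) :
    nonlocalOperator μ Ω d J ℓ (fun k y s => a * Real.exp (γ * s) * φ k y s) i x t <
      a * (γ * Real.exp (γ * t) * φ i x t + Real.exp (γ * t) * φ' i x t) := by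
  rw [nonlocalOperator_time_mul μ Ω d J ℓ (fun s => a * Real.exp (γ * s))]
  calc a * Real.exp (γ * t) * nonlocalOperator μ Ω d J ℓ φ i x t
      ≤ a * Real.exp (γ * t) * (β * φ i x t + φ' i x t) := by gcongr; linarith
    _ < a * Real.exp (γ * t) * (γ * φ i x t + φ' i x t) := by gcongr
    _ = a * (γ * Real.exp (γ * t) * φ i x t + Real.exp (γ * t) * φ' i x t) := by ring

variable [TopologicalSpace X] [OpensMeasurableSpace X] [IsFiniteMeasureOnCompacts μ]

theorem nonlocalOperator_le_of_le_of_eq (hΩ : MeasurableSet Ω) (hΩc : IsCompact (closure Ω))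
    {u u' : ι → X → ℝ → ℝ} {i : ι} {x : X} {t : ℝ} (hd : 0 ≤ d i) (hJ : Continuous (J i x))
    (hJnn : ∀ y, 0 ≤ J i x y) (hℓ : ∀ k, i ≠ k → 0 ≤ ℓ i k x t)
    (hu : ContinuousOn (fun y => u i y t) (closure Ω))
    (hu' : ContinuousOn (fun y => u' i y t) (closure Ω))
    (hle : ∀ k, ∀ y ∈ closure Ω, u k y t ≤ u' k y t) (hx : x ∈ closure Ω)
    (heq : u i x t = u' i x t) :
    nonlocalOperator μ Ω d J ℓ u i x t ≤ nonlocalOperator μ Ω d J ℓ u' i x t := by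
  have hint : ∀ f : X → ℝ, ContinuousOn f (closure Ω) →
      IntegrableOn (fun y => J i x y * f y) Ω μ := fun f hf =>
    ((hJ.continuousOn.mul hf).integrableOn_compact' hΩc isClosed_closure.measurableSet).mono_set
      subset_closure
  refine add_le_add (mul_le_mul_of_nonneg_left ?_ hd) (Finset.sum_le_sum fun k _ => ?_)
  · exact setIntegral_mono_on (hint _ hu) (hint _ hu') hΩ fun y hy =>
      mul_le_mul_of_nonneg_left (hle i y (subset_closure hy)) (hJnn y)
  · rcases eq_or_ne i k with rfl | hk
    · rw [heq]
    · exact mul_le_mul_of_nonneg_left (hle k x hx) (hℓ k hk)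

theorem lt_of_strict_supersolution (hΩ : MeasurableSet Ω) (hΩc : IsCompact (closure Ω)) {T : ℝ}
    (hd : ∀ i, 0 ≤ d i) (hJ : ∀ i x, Continuous (J i x)) (hJnn : ∀ i x y, 0 ≤ J i x y)
    (hℓ : ∀ i k, i ≠ k → ∀ x ∈ closure Ω, ∀ t ∈ Icc 0 T, 0 ≤ ℓ i k x t)
    {v v' : ι → X → ℝ → ℝ} (hv : HasTimeDerivOn (closure Ω) T v v')
    (hveq : ∀ i, ∀ x ∈ closure Ω, ∀ t ∈ Ioc 0 T, v' i x t = nonlocalOperator μ Ω d J ℓ v i x t)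
    {ψ ψ' : ι → X → ℝ → ℝ} (hψ : HasTimeDerivOn (closure Ω) T ψ ψ')
    (hψlt : ∀ i, ∀ x ∈ closure Ω, ∀ t ∈ Ioc 0 T, nonlocalOperator μ Ω d J ℓ ψ i x t < ψ' i x t)
    (h0 : ∀ i, ∀ x ∈ closure Ω, v i x 0 < ψ i x 0) :
    ∀ i, ∀ x ∈ closure Ω, ∀ t ∈ Icc 0 T, v i x t < ψ i x t := by
  have hneg := forall_neg_of_deriv_neg_at_zeros hΩc (hv.sub hψ)
    (fun i x hx => sub_neg.2 (h0 i x hx)) fun t ht hle i x hx heq => by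
      have ht' := Ioc_subset_Icc_self ht
      rw [sub_neg, hveq i x hx t ht]
      exact (nonlocalOperator_le_of_le_of_eq hΩ hΩc (hd i) (hJ i x) (hJnn i x)
        (fun k hk => hℓ i k hk x hx t ht') (hv.continuousOn_slice i ht')
        (hψ.continuousOn_slice i ht') (fun k y hy => sub_nonpos.1 (hle k y hy)) hx
        (sub_eq_zero.1 heq)).trans_lt (hψlt i x hx t ht)
  exact fun i x hx t ht => sub_neg.1 (hneg i x hx t ht)

theorem le_exp_mul_of_initial_le (hΩ : MeasurableSet Ω) (hΩc : IsCompact (closure Ω)) {T : ℝ}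
    (hT : 0 ≤ T) (hd : ∀ i, 0 ≤ d i) (hJ : ∀ i x, Continuous (J i x))
    (hJnn : ∀ i x y, 0 ≤ J i x y)
    (hℓ : ∀ i k, i ≠ k → ∀ x ∈ closure Ω, ∀ t ∈ Icc 0 T, 0 ≤ ℓ i k x t)
    {v v' : ι → X → ℝ → ℝ} (hv : HasTimeDerivOn (closure Ω) T v v')
    (hveq : ∀ i, ∀ x ∈ closure Ω, ∀ t ∈ Ioc 0 T, v' i x t = nonlocalOperator μ Ω d J ℓ v i x t)
    {φ φ' : ι → X → ℝ → ℝ} (hφ : HasTimeDerivOn (closure Ω) T φ φ')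
    (hφpos : ∀ i, ∀ x ∈ closure Ω, ∀ t ∈ Icc 0 T, 0 < φ i x t) {β : ℝ}
    (hLφ : ∀ i, ∀ x ∈ closure Ω, ∀ t ∈ Ioc 0 T,
      nonlocalOperator μ Ω d J ℓ φ i x t - φ' i x t ≤ β * φ i x t)
    {K : ℝ} (hK : 0 ≤ K) (h0 : ∀ i, ∀ x ∈ closure Ω, v i x 0 ≤ K * φ i x 0) :
    ∀ i, ∀ x ∈ closure Ω, ∀ t ∈ Icc 0 T, v i x t ≤ K * Real.exp (β * t) * φ i x t := by
  intro i x hx t ht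
  have hε : ∀ ε > 0, v i x t ≤ (K + ε) * Real.exp ((β + ε) * t) * φ i x t := fun ε hε =>
    (lt_of_strict_supersolution hΩ hΩc hd hJ hJnn hℓ hv hveq
      (hφ.const_mul_exp_mul (K + ε) (β + ε))
      (fun k y hy s hs => nonlocalOperator_const_mul_exp_mul_lt (by linarith) (by linarith)
        (hφpos k y hy s (Ioc_subset_Icc_self hs)) (hLφ k y hy s hs))
      (fun k y hy => by
        simpa only [mul_zero, Real.exp_zero, mul_one] using (h0 k y hy).trans_lt
          (mul_lt_mul_of_pos_right (lt_add_of_pos_right K hε) (hφpos k y hy 0 (left_mem_Icc.2 hT))))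
      i x hx t ht).le
  have hlim : Tendsto (fun ε => (K + ε) * Real.exp ((β + ε) * t) * φ i x t) (𝓝[>] 0)
      (𝓝 (K * Real.exp (β * t) * φ i x t)) := by
    have hcont : Continuous fun ε => (K + ε) * Real.exp ((β + ε) * t) * φ i x t := by fun_prop
    simpa using hcont.continuousWithinAt.tendsto (x := 0) (s := Ioi 0)
  exact ge_of_tendsto hlim (eventually_nhdsWithin_of_forall hε)

theorem abs_le_exp_mul_of_abs_initial_le (hΩ : MeasurableSet Ω) (hΩc : IsCompact (closure Ω))
    {T : ℝ} (hT : 0 ≤ T) (hd : ∀ i, 0 ≤ d i) (hJ : ∀ i x, Continuous (J i x))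
    (hJnn : ∀ i x y, 0 ≤ J i x y)
    (hℓ : ∀ i k, i ≠ k → ∀ x ∈ closure Ω, ∀ t ∈ Icc 0 T, 0 ≤ ℓ i k x t)
    {v v' : ι → X → ℝ → ℝ} (hv : HasTimeDerivOn (closure Ω) T v v')
    (hveq : ∀ i, ∀ x ∈ closure Ω, ∀ t ∈ Ioc 0 T, v' i x t = nonlocalOperator μ Ω d J ℓ v i x t)
    {φ φ' : ι → X → ℝ → ℝ} (hφ : HasTimeDerivOn (closure Ω) T φ φ')
    (hφpos : ∀ i, ∀ x ∈ closure Ω, ∀ t ∈ Icc 0 T, 0 < φ i x t) {β : ℝ}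
    (hLφ : ∀ i, ∀ x ∈ closure Ω, ∀ t ∈ Ioc 0 T,
      nonlocalOperator μ Ω d J ℓ φ i x t - φ' i x t ≤ β * φ i x t)
    {K : ℝ} (hK : 0 ≤ K) (h0 : ∀ i, ∀ x ∈ closure Ω, |v i x 0| ≤ K * φ i x 0) :
    ∀ i, ∀ x ∈ closure Ω, ∀ t ∈ Icc 0 T, |v i x t| ≤ K * Real.exp (β * t) * φ i x t := by
  have hup := le_exp_mul_of_initial_le hΩ hΩc hT hd hJ hJnn hℓ hv hveq hφ hφpos hLφ hK
    fun i x hx => (le_abs_self _).trans (h0 i x hx)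
  have hdown := le_exp_mul_of_initial_le hΩ hΩc hT hd hJ hJnn hℓ hv.neg
    (fun i x hx t ht => by rw [nonlocalOperator_neg, hveq i x hx t ht]) hφ hφpos hLφ hK
    fun i x hx => (neg_le_abs _).trans (h0 i x hx)
  exact fun i x hx t ht => abs_le.2 ⟨neg_le.1 (hdown i x hx t ht), hup i x hx t ht⟩

end NonlocalSystem

theorem IsCompact.exists_bounds_of_continuousOn_pos {ι X : Type*} [Fintype ι]
    [TopologicalSpace X] {C : Set X} (hC : IsCompact C) {f : ι → X → ℝ}
    (hf : ∀ i, ContinuousOn (f i) C) (hpos : ∀ i, ∀ x ∈ C, 0 < f i x) :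
    ∃ M W, 0 ≤ M ∧ 0 ≤ W ∧ ∀ i, ∀ x ∈ C, 1 ≤ M * f i x ∧ f i x ≤ W := by
  obtain ⟨W, hW⟩ := hC.exists_bound_of_continuousOn (continuousOn_pi.2 hf)
  obtain ⟨M, hM⟩ := hC.exists_bound_of_continuousOn
    (continuousOn_pi.2 fun i => (hf i).inv₀ fun x hx => (hpos i x hx).ne')
  refine ⟨max M 0, max W 0, le_max_right _ _, le_max_right _ _, fun i x hx => ⟨?_, ?_⟩⟩
  · have hinv : (f i x)⁻¹ ≤ M :=
      (le_abs_self _).trans ((norm_le_pi_norm (fun j => (f j x)⁻¹) i).trans (hM x hx))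
    have hfx := hpos i x hx
    calc 1 = (f i x)⁻¹ * f i x := (inv_mul_cancel₀ hfx.ne').symm
      _ ≤ max M 0 * f i x := by gcongr; exact hinv.trans (le_max_left _ _)
  · exact ((le_abs_self _).trans ((norm_le_pi_norm (fun j => f j x) i).trans (hW x hx))).trans
      (le_max_left _ _)

theorem opNorm_pow_le_of_weighted_bound {α ι : Type*} [TopologicalSpace α] [Fintype ι]
    (P : (α →ᵇ (ι → ℝ)) →L[ℝ] (α →ᵇ (ι → ℝ))) {w : α → ι → ℝ} {A M W : ℝ} (hA : 0 ≤ A)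
    (hM : 0 ≤ M) (hW : 0 ≤ W) (hwM : ∀ x i, 1 ≤ M * w x i) (hwW : ∀ x i, w x i ≤ W)
    (hP : ∀ u : α →ᵇ (ι → ℝ), ∀ K, 0 ≤ K → (∀ x i, |u x i| ≤ K * w x i) →
      ∀ x i, |P u x i| ≤ K * A * w x i)
    (n : ℕ) : ‖P ^ n‖ ≤ M * W * A ^ n := by
  have hiter : ∀ u : α →ᵇ (ι → ℝ), ∀ x i, |(P ^ n) u x i| ≤ ‖u‖ * M * A ^ n * w x i := by
    intro u
    induction n with
    | zero =>
      intro x i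
      calc |u x i| ≤ ‖u‖ := (norm_le_pi_norm (u x) i).trans (u.norm_coe_le_norm x)
        _ ≤ ‖u‖ * (M * w x i) := le_mul_of_one_le_right (norm_nonneg _) (hwM x i)
        _ = ‖u‖ * M * A ^ 0 * w x i := by ring
    | succ n ih =>
      intro x i
      rw [pow_succ', mul_apply_eq_comp]
      calc |P ((P ^ n) u) x i| ≤ ‖u‖ * M * A ^ n * A * w x i := hP _ _ (by positivity) ih x i
        _ = ‖u‖ * M * A ^ (n + 1) * w x i := by ring
  refine ContinuousLinearMap.opNorm_le_bound _ (by positivity) fun u =>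
    (BoundedContinuousFunction.norm_le (by positivity)).2 fun x =>
      (pi_norm_le_iff_of_nonneg (by positivity)).2 fun i => ?_
  calc ‖(P ^ n) u x i‖ = |(P ^ n) u x i| := Real.norm_eq_abs _
    _ ≤ ‖u‖ * M * A ^ n * w x i := hiter u x i
    _ ≤ ‖u‖ * M * A ^ n * W := by gcongr; exact hwW x i
    _ = M * W * A ^ n * ‖u‖ := by ring

theorem le_of_tendsto_rpow_one_div_of_le_mul_pow {a : ℕ → ℝ} {C A r : ℝ} (ha : ∀ n, 0 ≤ a n)
    (hA : 0 ≤ A) (hle : ∀ n, a n ≤ C * A ^ n)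
    (hr : Tendsto (fun n : ℕ => a n ^ (1 / (n : ℝ))) atTop (𝓝 r)) : r ≤ A := by
  set B := max C 1
  have hB : 0 < B := one_pos.trans_le (le_max_right _ _)
  have hbound : ∀ n : ℕ, n ≠ 0 → a n ^ (1 / (n : ℝ)) ≤ B ^ (1 / (n : ℝ)) * A := fun n hn =>
    calc a n ^ (1 / (n : ℝ)) ≤ (B * A ^ n) ^ (1 / (n : ℝ)) := by
          gcongr
          · exact ha n
          · exact (hle n).trans (by gcongr; exact le_max_left _ _)
      _ = B ^ (1 / (n : ℝ)) * A := by
          rw [Real.mul_rpow hB.le (by positivity), one_div, Real.pow_rpow_inv_natCast hA hn]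
  have hlim : Tendsto (fun n : ℕ => B ^ (1 / (n : ℝ)) * A) atTop (𝓝 A) := by
    simpa using (tendsto_const_nhds.rpow tendsto_one_div_atTop_nhds_zero_nat
      (Or.inl hB.ne')).mul_const A
  exact le_of_tendsto_of_tendsto hr hlim
    (eventually_atTop.2 ⟨1, fun n hn => hbound n (by omega)⟩)

theorem stmt_13_general {N m : ℕ} (Ω : Set (Fin N → ℝ))
    (hΩopen : IsOpen Ω) (hΩbdd : Bornology.IsBounded Ω)
    (T : ℝ) (hT : 0 < T)
    (d : Fin m → ℝ) (hd : ∀ i, 0 < d i)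
    -- each kernel Jᵢ satisfies condition (J)
    (J : Fin m → (Fin N → ℝ) → (Fin N → ℝ) → ℝ)
    (hJcont : ∀ i, Continuous (Function.uncurry (J i)))
    (hJnn : ∀ i x y, 0 ≤ J i x y)
    -- coefficients ℓ_ik ∈ C(Q̄_T) satisfying (L1)
    (ℓ : Fin m → Fin m → (Fin N → ℝ) → ℝ → ℝ)
    (hL1 : ∀ i k, i ≠ k → ∀ x ∈ closure Ω, ∀ t ∈ Icc (0:ℝ) T, 0 ≤ ℓ i k x t)
    -- P is the period-T solution map on C(Ω̄, ℝ^m) (with the sup norm)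
    (P : BoundedContinuousFunction (↥(closure Ω)) (Fin m → ℝ) →L[ℝ] BoundedContinuousFunction (↥(closure Ω)) (Fin m → ℝ))
    (hP : ∀ v₀ : BoundedContinuousFunction (↥(closure Ω)) (Fin m → ℝ),
      ∃ v vt : Fin m → (Fin N → ℝ) → ℝ → ℝ,
        (∀ i, ContinuousOn (fun q : (Fin N → ℝ) × ℝ => v i q.1 q.2)
          (closure Ω ×ˢ Icc (0:ℝ) T)) ∧
        (∀ i, ∀ x ∈ closure Ω, ∀ t ∈ Icc (0:ℝ) T,
          HasDerivWithinAt (v i x) (vt i x t) (Icc (0:ℝ) T) t) ∧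
        (∀ i, ∀ x ∈ closure Ω, ContinuousOn (vt i x) (Icc (0:ℝ) T)) ∧
        (∀ i, ∀ x ∈ closure Ω, ∀ t ∈ Ioc (0:ℝ) T,
          vt i x t = d i * (∫ y in Ω, J i x y * v i y t)
            + ∑ k, ℓ i k x t * v k x t) ∧
        (∀ x : ↥(closure Ω), ∀ i, v i (↑x) 0 = v₀ x i) ∧
        (∀ x : ↥(closure Ω), ∀ i, P v₀ x i = v i (↑x) T))
    -- the test function φ ∈ X^m and the number β
    (β : ℝ) (φ φt : Fin m → (Fin N → ℝ) → ℝ → ℝ)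
    (hφcont : ∀ i, ContinuousOn (fun q : (Fin N → ℝ) × ℝ => φ i q.1 q.2)
      (closure Ω ×ˢ Icc (0:ℝ) T))
    (hφderiv : ∀ i, ∀ x ∈ closure Ω, ∀ t ∈ Icc (0:ℝ) T,
      HasDerivWithinAt (φ i x) (φt i x t) (Icc (0:ℝ) T) t)
    (hφpos : ∀ i, ∀ x ∈ closure Ω, ∀ t ∈ Icc (0:ℝ) T, 0 < φ i x t)
    -- 𝓛[φ] ≤ βφ on Q̄_T
    (hLφ : ∀ i, ∀ x ∈ closure Ω, ∀ t ∈ Icc (0:ℝ) T,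
      d i * (∫ y in Ω, J i x y * φ i y t)
        + (∑ k, ℓ i k x t * φ k x t) - φt i x t ≤ β * φ i x t)
    (hφT : ∀ i, ∀ x ∈ closure Ω, φ i x T ≤ φ i x 0) :
    ∀ r : ℝ,
      Tendsto (fun n : ℕ => ‖P ^ n‖ ^ (1 / (n:ℝ))) atTop (nhds r) →
      r ≤ Real.exp (β * T) := by
  intro r hr
  have hΩc : IsCompact (closure Ω) := hΩbdd.isCompact_closure
  have h0T : (0 : ℝ) ∈ Icc 0 T := left_mem_Icc.2 hT.le
  have hφ : HasTimeDerivOn (closure Ω) T φ φt := ⟨hφcont, hφderiv⟩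
  have hstep : ∀ u : ↥(closure Ω) →ᵇ (Fin m → ℝ), ∀ K, 0 ≤ K →
      (∀ x i, |u x i| ≤ K * φ i x 0) → ∀ x i, |P u x i| ≤ K * Real.exp (β * T) * φ i x 0 := by
    intro u K hK hu x i
    obtain ⟨v, vt, hvcont, hvderiv, -, hveq, hv0, hvT⟩ := hP u
    have hv0' : ∀ i, ∀ y ∈ closure Ω, |v i y 0| ≤ K * φ i y 0 := fun j y hy => by
      rw [hv0 ⟨y, hy⟩ j]; exact hu ⟨y, hy⟩ j
    rw [hvT]
    calc |v i x T| ≤ K * Real.exp (β * T) * φ i x T :=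
          abs_le_exp_mul_of_abs_initial_le hΩopen.measurableSet hΩc hT.le (fun i => (hd i).le)
            (fun i x => (hJcont i).uncurry_left x) hJnn hL1 ⟨hvcont, hvderiv⟩ hveq hφ hφpos
            (fun i x hx t ht => hLφ i x hx t (Ioc_subset_Icc_self ht)) hK hv0' i x x.2 T
            (right_mem_Icc.2 hT.le)
      _ ≤ K * Real.exp (β * T) * φ i x 0 := by gcongr; exact hφT i x x.2
  obtain ⟨M, W, hM, hW, hMW⟩ := hΩc.exists_bounds_of_continuousOn_pos
    (fun i => hφ.continuousOn_slice i h0T) fun i x hx => hφpos i x hx 0 h0T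
  have hbound : ∀ n : ℕ, ‖P ^ n‖ ≤ M * W * Real.exp (β * T) ^ n :=
    opNorm_pow_le_of_weighted_bound P (w := fun x i => φ i x 0) (Real.exp_pos _).le hM hW
      (fun x i => (hMW i x x.2).1) (fun x i => (hMW i x x.2).2) hstep
  exact le_of_tendsto_rpow_one_div_of_le_mul_pow (a := fun n => ‖P ^ n‖)
    (fun n => (P ^ n).opNorm_nonneg) (Real.exp_pos _).le hbound hr

/-- upper bound `r(P) ≤ e^{βT}` for the spectral radius of the period map. -/
theorem stmt_13 {N m : ℕ} (Ω : Set (Fin N → ℝ)) (hΩne : Ω.Nonempty)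
    (hΩopen : IsOpen Ω) (hΩbdd : Bornology.IsBounded Ω)
    (T : ℝ) (hT : 0 < T)
    (d : Fin m → ℝ) (hd : ∀ i, 0 < d i)
    -- each kernel Jᵢ satisfies condition (J)
    (J : Fin m → (Fin N → ℝ) → (Fin N → ℝ) → ℝ)
    (hJcont : ∀ i, Continuous (Function.uncurry (J i)))
    (hJnn : ∀ i x y, 0 ≤ J i x y)
    (hJdiag : ∀ i x, 0 < J i x x)
    (hJint : ∀ i x, (∫ y, J i x y) = 1)
    -- coefficients ℓ_ik ∈ C(Q̄_T) satisfying (L1)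
    (ℓ : Fin m → Fin m → (Fin N → ℝ) → ℝ → ℝ)
    (hℓcont : ∀ i k, ContinuousOn (fun q : (Fin N → ℝ) × ℝ => ℓ i k q.1 q.2)
      (closure Ω ×ˢ Icc (0:ℝ) T))
    (hL1 : ∀ i k, i ≠ k → ∀ x ∈ closure Ω, ∀ t ∈ Icc (0:ℝ) T, 0 ≤ ℓ i k x t)
    -- P is the period-T solution map on C(Ω̄, ℝ^m) (with the sup norm)
    (P : BoundedContinuousFunction (↥(closure Ω)) (Fin m → ℝ) →L[ℝ] BoundedContinuousFunction (↥(closure Ω)) (Fin m → ℝ))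
    (hP : ∀ v₀ : BoundedContinuousFunction (↥(closure Ω)) (Fin m → ℝ),
      ∃ v vt : Fin m → (Fin N → ℝ) → ℝ → ℝ,
        (∀ i, ContinuousOn (fun q : (Fin N → ℝ) × ℝ => v i q.1 q.2)
          (closure Ω ×ˢ Icc (0:ℝ) T)) ∧
        (∀ i, ∀ x ∈ closure Ω, ∀ t ∈ Icc (0:ℝ) T,
          HasDerivWithinAt (v i x) (vt i x t) (Icc (0:ℝ) T) t) ∧
        (∀ i, ∀ x ∈ closure Ω, ContinuousOn (vt i x) (Icc (0:ℝ) T)) ∧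
        (∀ i, ∀ x ∈ closure Ω, ∀ t ∈ Ioc (0:ℝ) T,
          vt i x t = d i * (∫ y in Ω, J i x y * v i y t)
            + ∑ k, ℓ i k x t * v k x t) ∧
        (∀ x : ↥(closure Ω), ∀ i, v i (↑x) 0 = v₀ x i) ∧
        (∀ x : ↥(closure Ω), ∀ i, P v₀ x i = v i (↑x) T))
    -- the test function φ ∈ X^m and the number β
    (β : ℝ) (φ φt : Fin m → (Fin N → ℝ) → ℝ → ℝ)
    (hφcont : ∀ i, ContinuousOn (fun q : (Fin N → ℝ) × ℝ => φ i q.1 q.2)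
      (closure Ω ×ˢ Icc (0:ℝ) T))
    (hφderiv : ∀ i, ∀ x ∈ closure Ω, ∀ t ∈ Icc (0:ℝ) T,
      HasDerivWithinAt (φ i x) (φt i x t) (Icc (0:ℝ) T) t)
    (hφtcont : ∀ i, ∀ x ∈ closure Ω, ContinuousOn (φt i x) (Icc (0:ℝ) T))
    (hφpos : ∀ i, ∀ x ∈ closure Ω, ∀ t ∈ Icc (0:ℝ) T, 0 < φ i x t)
    -- 𝓛[φ] ≤ βφ on Q̄_T
    (hLφ : ∀ i, ∀ x ∈ closure Ω, ∀ t ∈ Icc (0:ℝ) T,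
      d i * (∫ y in Ω, J i x y * φ i y t)
        + (∑ k, ℓ i k x t * φ k x t) - φt i x t ≤ β * φ i x t)
    (hφT : ∀ i, ∀ x ∈ closure Ω, φ i x T ≤ φ i x 0) :
    ∀ r : ℝ,
      Tendsto (fun n : ℕ => ‖P ^ n‖ ^ (1 / (n:ℝ))) atTop (nhds r) →
      r ≤ Real.exp (β * T) :=
  stmt_13_general Ω hΩopen hΩbdd T hT d hd J hJcont hJnn ℓ hL1 P hP β φ φt hφcont hφderiv hφpos hLφ
    hφT
end

section
/- Assume (L1). Suppose λ ∈ ℝ and φ ∈ X^m_T with φ_i(x,t) > 0 for all (x,t) ∈ Q̄_T and all i satisfy 𝓛[φ] = λφ on Q̄_T. Suppose further there exist x̄ ∈ Ω̄, θ_M ∈ ℝ, and ψ = (ψ_1,…,ψ_m) : [0,T] → ℝ^m continuously differentiable, with ψ ≥ 0, ψ ≢ 0, ψ(0) = ψ(T), satisfying the adjoint equation Σ_{k=1}^m ℓ_{ki}(x̄,t) ψ_k(t) + ψ_i'(t) = θ_M ψ_i(t) for all i and all t ∈ [0,T]. Then λ > θ_M. -/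
/-
Pair the eigenfunction with the adjoint solution at `x̄`: `W t = ∑ᵢ ψᵢ(t) φᵢ(x̄,t)`. The local
coupling terms cancel in `W'` (they are adjoint to each other), leaving
`W' = (θ_M - λ) W + R` with `R = ∑ᵢ ψᵢ dᵢ ∫_Ω Jᵢ(x̄,y) φᵢ(y,t) dy ≥ 0`, and `R > 0` wherever some
`ψᵢ > 0` because `Jᵢ(x̄,x̄) > 0`. Then `e^{(λ-θ_M)t} W` is nondecreasing, and periodicity of the
nonnegative `W` is incompatible with this growth unless `λ > θ_M`.
-/

open MeasureTheory Set Function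

/-- An m×m real matrix is irreducible if the index set cannot be split into two
disjoint nonempty parts `I`, `Iᶜ` with `a i k = 0` for all `i ∈ I`, `k ∈ Iᶜ`. -/
def MatIrreducible {m : ℕ} (a : Fin m → Fin m → ℝ) : Prop :=
  ∀ I : Set (Fin m), I.Nonempty → Iᶜ.Nonempty → ∃ i ∈ I, ∃ k ∈ Iᶜ, a i k ≠ 0

open Matrix

theorem setIntegral_pos_of_pos_on_open_inter {X : Type*} [TopologicalSpace X] [MeasurableSpace X]
    [OpensMeasurableSpace X] {μ : Measure X} [μ.IsOpenPosMeasure] {Ω U : Set X} {f : X → ℝ}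
    (hΩ : IsOpen Ω) (hU : IsOpen U) (hUΩ : (U ∩ Ω).Nonempty) (hf : IntegrableOn f Ω μ)
    (hnn : ∀ y ∈ Ω, 0 ≤ f y) (hpos : ∀ y ∈ U ∩ Ω, 0 < f y) : 0 < ∫ y in Ω, f y ∂μ := by
  have hf_ae : 0 ≤ᵐ[μ.restrict Ω] f :=
    (ae_restrict_iff' hΩ.measurableSet).2 (ae_of_all _ hnn)
  rw [setIntegral_pos_iff_support_of_nonneg_ae hf_ae hf]
  calc 0 < μ (U ∩ Ω) := (hU.inter hΩ).measure_pos μ hUΩ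
    _ ≤ μ (support f ∩ Ω) := measure_mono fun y hy => ⟨(hpos y hy).ne', hy.2⟩

theorem setIntegral_kernel_mul_pos {E : Type*} [MetricSpace E] [ProperSpace E] [MeasurableSpace E]
    [OpensMeasurableSpace E] {μ : Measure E} [μ.IsOpenPosMeasure] [IsFiniteMeasureOnCompacts μ]
    {Ω : Set E} (hΩ : IsOpen Ω) (hΩb : Bornology.IsBounded Ω) {K u : E → ℝ}
    (hK : Continuous K) (hKnn : ∀ y ∈ Ω, 0 ≤ K y) {x : E} (hx : x ∈ closure Ω) (hKx : 0 < K x)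
    (hu : ContinuousOn u (closure Ω)) (hupos : ∀ y ∈ Ω, 0 < u y) :
    0 < ∫ y in Ω, K y * u y ∂μ := by
  have hint : IntegrableOn (fun y => K y * u y) Ω μ :=
    ((hK.continuousOn.mul hu).integrableOn_compact hΩb.isCompact_closure).mono_set subset_closure
  have hUopen : IsOpen {y | 0 < K y} := isOpen_lt continuous_const hK
  obtain ⟨y, hyU, hyΩ⟩ := mem_closure_iff.1 hx _ hUopen hKx
  exact setIntegral_pos_of_pos_on_open_inter hΩ hUopen ⟨y, hyU, hyΩ⟩ hint
    (fun y hy => mul_nonneg (hKnn y hy) (hupos y hy).le)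
    (fun y hy => mul_pos hy.1 (hupos y hy.2))

theorem HasDerivWithinAt.dotProduct {ι : Type*} [Fintype ι] {u v : ℝ → ι → ℝ} {u' v' : ι → ℝ}
    {s : Set ℝ} {t : ℝ} (hu : ∀ i, HasDerivWithinAt (fun r => u r i) (u' i) s t)
    (hv : ∀ i, HasDerivWithinAt (fun r => v r i) (v' i) s t) :
    HasDerivWithinAt (fun r => u r ⬝ᵥ v r) (u' ⬝ᵥ v t + u t ⬝ᵥ v') s t := by
  simp only [_root_.dotProduct, ← Finset.sum_add_distrib]
  exact HasDerivWithinAt.fun_sum fun i _ => (hu i).mul (hv i)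

theorem MonotoneOn.hasDerivWithinAt_eq_zero_of_le {V : ℝ → ℝ} {a b t v : ℝ}
    (hV : MonotoneOn V (Icc a b)) (hab : a < b) (hba : V b ≤ V a) (ht : t ∈ Icc a b)
    (hv : HasDerivWithinAt V v (Icc a b) t) : v = 0 := by
  have hconst : EqOn V (fun _ => V a) (Icc a b) := fun s hs =>
    le_antisymm (hba.trans' (hV hs (right_mem_Icc.2 hab.le) hs.2))
      (hV (left_mem_Icc.2 hab.le) hs hs.1)
  have hzero : HasDerivWithinAt V 0 (Icc a b) t :=
    (hasDerivWithinAt_const t _ (V a)).congr hconst (hconst ht)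
  exact (uniqueDiffOn_Icc hab t ht).eq_deriv _ hv hzero

theorem neg_of_periodic_hasDerivWithinAt {W R : ℝ → ℝ} {c T : ℝ} (hT : 0 < T)
    (hW : ∀ t ∈ Icc 0 T, HasDerivWithinAt W (c * W t + R t) (Icc 0 T) t)
    (hR : ∀ t ∈ Icc 0 T, 0 ≤ R t) (hRpos : ∃ t ∈ Icc 0 T, 0 < R t)
    (hper : W T = W 0) (hW0 : 0 ≤ W 0) : c < 0 := by
  by_contra! hc
  obtain ⟨t₀, ht₀, hRt₀⟩ := hRpos
  set V : ℝ → ℝ := fun t => Real.exp (-c * t) * W t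
  have hV : ∀ t ∈ Icc 0 T, HasDerivWithinAt V (Real.exp (-c * t) * R t) (Icc 0 T) t := by
    intro t ht
    have hexp : HasDerivWithinAt (fun s => Real.exp (-c * s)) (Real.exp (-c * t) * -c)
        (Icc 0 T) t := ((hasDerivAt_id t).const_mul (-c)).exp.hasDerivWithinAt.congr_deriv
          (by simp)
    exact (hexp.mul (hW t ht)).congr_deriv (by ring)
  have hVmono : MonotoneOn V (Icc 0 T) := by
    refine monotoneOn_of_hasDerivWithinAt_nonneg (f' := fun t => Real.exp (-c * t) * R t)
      (convex_Icc 0 T) (fun t ht => (hV t ht).continuousWithinAt) (fun t ht => ?_) (fun t ht => ?_)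
    · exact (hV t (interior_subset ht)).mono interior_subset
    · exact mul_nonneg (Real.exp_pos _).le (hR t (interior_subset ht))
  have hVT : V T ≤ V 0 := by
    simp only [V, mul_zero, Real.exp_zero, one_mul, hper]
    exact mul_le_of_le_one_left hW0 (Real.exp_le_one_iff.2 (by nlinarith))
  have := hVmono.hasDerivWithinAt_eq_zero_of_le hT hVT ht₀ (hV t₀ ht₀)
  exact (mul_pos (Real.exp_pos _) hRt₀).ne' this

theorem adjoint_pairing_eq {ι : Type*} [Fintype ι] (L : Matrix ι ι ℝ) {ψ ψ' φ φ' F : ι → ℝ}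
    {θ lam : ℝ} (hψ : ψ ᵥ* L + ψ' = θ • ψ) (hφ : F + L *ᵥ φ - φ' = lam • φ) :
    ψ' ⬝ᵥ φ + ψ ⬝ᵥ φ' = (θ - lam) * (ψ ⬝ᵥ φ) + ψ ⬝ᵥ F := by
  have hψ' : ψ' = θ • ψ - ψ ᵥ* L := by rw [← hψ]; abel
  have hφ' : φ' = F + L *ᵥ φ - lam • φ := by rw [← hφ]; abel
  rw [hψ', hφ', sub_dotProduct, dotProduct_sub, dotProduct_add, dotProduct_mulVec,
    smul_dotProduct, dotProduct_smul, smul_eq_mul, smul_eq_mul]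
  ring

theorem dotProduct_pos_of_nonneg {ι : Type*} [Fintype ι] {v w : ι → ℝ} (hv : 0 ≤ v) (hw : 0 ≤ w)
    {i : ι} (hvi : 0 < v i) (hwi : 0 < w i) : 0 < v ⬝ᵥ w :=
  Finset.sum_pos' (fun j _ => mul_nonneg (hv j) (hw j)) ⟨i, Finset.mem_univ _, mul_pos hvi hwi⟩

theorem stmt_15_general {N m : ℕ} (Ω : Set (Fin N → ℝ)) (hΩopen : IsOpen Ω) (hΩbdd : Bornology.IsBounded Ω)
    (T : ℝ) (hT : 0 < T)
    (d : Fin m → ℝ) (hd : ∀ i, 0 < d i)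
    -- each kernel Jᵢ satisfies condition (J)
    (J : Fin m → (Fin N → ℝ) → (Fin N → ℝ) → ℝ)
    (hJcont : ∀ i, Continuous (Function.uncurry (J i)))
    (hJnn : ∀ i x y, 0 ≤ J i x y)
    (hJdiag : ∀ i x, 0 < J i x x)
    (ℓ : Fin m → Fin m → (Fin N → ℝ) → ℝ → ℝ)
    -- (λ, φ): principal eigenpair of 𝓛, φ ∈ X^m_T strongly positive
    (lam : ℝ) (φ φt : Fin m → (Fin N → ℝ) → ℝ → ℝ)
    (hφcont : ∀ i, ContinuousOn (fun q : (Fin N → ℝ) × ℝ => φ i q.1 q.2)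
      (closure Ω ×ˢ Icc (0:ℝ) T))
    (hφderiv : ∀ i, ∀ x ∈ closure Ω, ∀ t ∈ Icc (0:ℝ) T,
      HasDerivWithinAt (φ i x) (φt i x t) (Icc (0:ℝ) T) t)
    (hφper : ∀ i, ∀ x ∈ closure Ω, φ i x 0 = φ i x T)
    (hφpos : ∀ i, ∀ x ∈ closure Ω, ∀ t ∈ Icc (0:ℝ) T, 0 < φ i x t)
    (hφeq : ∀ i, ∀ x ∈ closure Ω, ∀ t ∈ Icc (0:ℝ) T,
      d i * (∫ y in Ω, J i x y * φ i y t) + (∑ k, ℓ i k x t * φ k x t)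
        - φt i x t = lam * φ i x t)
    -- the adjoint periodic eigenfunction ψ at x̄ with exponent θ_M
    (xb : Fin N → ℝ) (hxb : xb ∈ closure Ω) (θM : ℝ)
    (ψ ψt : ℝ → Fin m → ℝ)
    (hψderiv : ∀ i, ∀ t ∈ Icc (0:ℝ) T,
      HasDerivWithinAt (fun s => ψ s i) (ψt t i) (Icc (0:ℝ) T) t)
    (hψnn : ∀ i, ∀ t ∈ Icc (0:ℝ) T, 0 ≤ ψ t i)
    (hψne : ∃ i, ∃ t ∈ Icc (0:ℝ) T, ψ t i ≠ 0)
    (hψper : ψ 0 = ψ T)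
    (hψeq : ∀ i, ∀ t ∈ Icc (0:ℝ) T,
      (∑ k, ℓ k i xb t * ψ t k) + ψt t i = θM * ψ t i) :
    θM < lam := by
  obtain ⟨i₀, t₀, ht₀, hψ₀⟩ := hψne
  set F : ℝ → Fin m → ℝ := fun t i => d i * ∫ y in Ω, J i xb y * φ i y t
  set φb : ℝ → Fin m → ℝ := fun t i => φ i xb t
  have hF : ∀ t ∈ Icc 0 T, 0 ≤ F t := fun t ht i =>
    mul_nonneg (hd i).le <| setIntegral_nonneg hΩopen.measurableSet fun y hy =>
      mul_nonneg (hJnn i xb y) (hφpos i y (subset_closure hy) t ht).le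
  have hF₀ : 0 < F t₀ i₀ := by
    refine mul_pos (hd i₀) (setIntegral_kernel_mul_pos hΩopen hΩbdd
      ((hJcont i₀).comp (continuous_const.prodMk continuous_id)) (fun y _ => hJnn i₀ xb y) hxb
      (hJdiag i₀ xb) ?_ fun y hy => hφpos i₀ y (subset_closure hy) t₀ ht₀)
    exact (hφcont i₀).comp (continuous_id.prodMk continuous_const).continuousOn
      fun y hy => ⟨hy, ht₀⟩
  have hψ : ∀ t ∈ Icc 0 T, 0 ≤ ψ t := fun t ht i => hψnn i t ht
  have hW : ∀ t ∈ Icc 0 T, HasDerivWithinAt (fun s => ψ s ⬝ᵥ φb s)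
      ((θM - lam) * (ψ t ⬝ᵥ φb t) + ψ t ⬝ᵥ F t) (Icc 0 T) t := by
    intro t ht
    rw [← adjoint_pairing_eq (Matrix.of fun i k => ℓ i k xb t) (ψ' := ψt t)
      (φ' := fun i => φt i xb t)]
    · exact HasDerivWithinAt.dotProduct (fun i => hψderiv i t ht)
        fun i => hφderiv i xb hxb t ht
    · ext i; simp [Matrix.vecMul, dotProduct, mul_comm, hψeq i t ht]
    · ext i; simp [Matrix.mulVec, dotProduct, F, φb, hφeq i xb hxb t ht]
  have hrate := neg_of_periodic_hasDerivWithinAt hT hW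
    (fun t ht => dotProduct_nonneg_of_nonneg (hψ t ht) (hF t ht))
    ⟨t₀, ht₀, dotProduct_pos_of_nonneg (hψ t₀ ht₀) (hF t₀ ht₀)
      ((hψnn i₀ t₀ ht₀).lt_of_ne' hψ₀) hF₀⟩
    (by simp only [φb, hψper, hφper _ xb hxb])
    (dotProduct_nonneg_of_nonneg (hψ 0 (left_mem_Icc.2 hT.le))
      fun i => (hφpos i xb hxb 0 (left_mem_Icc.2 hT.le)).le)
  linarith

/-- if 𝓛 has a principal eigenpair (λ, φ) with φ strongly positive,
then λ is strictly larger than any Floquet exponent θ_M admitting a nonnegative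
nontrivial periodic solution of the adjoint ODE at some point x̄. -/
theorem stmt_15 {N m : ℕ} (Ω : Set (Fin N → ℝ)) (hΩne : Ω.Nonempty)
    (hΩopen : IsOpen Ω) (hΩbdd : Bornology.IsBounded Ω)
    (T : ℝ) (hT : 0 < T)
    (d : Fin m → ℝ) (hd : ∀ i, 0 < d i)
    -- each kernel Jᵢ satisfies condition (J)
    (J : Fin m → (Fin N → ℝ) → (Fin N → ℝ) → ℝ)
    (hJcont : ∀ i, Continuous (Function.uncurry (J i)))
    (hJnn : ∀ i x y, 0 ≤ J i x y)
    (hJdiag : ∀ i x, 0 < J i x x)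
    (hJint : ∀ i x, (∫ y, J i x y) = 1)
    -- coefficients ℓ_ik ∈ C(Q̄_T)
    (ℓ : Fin m → Fin m → (Fin N → ℝ) → ℝ → ℝ)
    (hℓcont : ∀ i k, ContinuousOn (fun q : (Fin N → ℝ) × ℝ => ℓ i k q.1 q.2)
      (closure Ω ×ˢ Icc (0:ℝ) T))
    -- (L1): cooperativity
    (hL1 : ∀ i k, i ≠ k → ∀ x ∈ closure Ω, ∀ t ∈ Icc (0:ℝ) T, 0 ≤ ℓ i k x t)
    -- (λ, φ): principal eigenpair of 𝓛, φ ∈ X^m_T strongly positive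
    (lam : ℝ) (φ φt : Fin m → (Fin N → ℝ) → ℝ → ℝ)
    (hφcont : ∀ i, ContinuousOn (fun q : (Fin N → ℝ) × ℝ => φ i q.1 q.2)
      (closure Ω ×ˢ Icc (0:ℝ) T))
    (hφderiv : ∀ i, ∀ x ∈ closure Ω, ∀ t ∈ Icc (0:ℝ) T,
      HasDerivWithinAt (φ i x) (φt i x t) (Icc (0:ℝ) T) t)
    (hφtcont : ∀ i, ∀ x ∈ closure Ω, ContinuousOn (φt i x) (Icc (0:ℝ) T))
    (hφper : ∀ i, ∀ x ∈ closure Ω, φ i x 0 = φ i x T)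
    (hφpos : ∀ i, ∀ x ∈ closure Ω, ∀ t ∈ Icc (0:ℝ) T, 0 < φ i x t)
    (hφeq : ∀ i, ∀ x ∈ closure Ω, ∀ t ∈ Icc (0:ℝ) T,
      d i * (∫ y in Ω, J i x y * φ i y t) + (∑ k, ℓ i k x t * φ k x t)
        - φt i x t = lam * φ i x t)
    -- the adjoint periodic eigenfunction ψ at x̄ with exponent θ_M
    (xb : Fin N → ℝ) (hxb : xb ∈ closure Ω) (θM : ℝ)
    (ψ ψt : ℝ → Fin m → ℝ)
    (hψderiv : ∀ i, ∀ t ∈ Icc (0:ℝ) T,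
      HasDerivWithinAt (fun s => ψ s i) (ψt t i) (Icc (0:ℝ) T) t)
    (hψtcont : ∀ i, ContinuousOn (fun s => ψt s i) (Icc (0:ℝ) T))
    (hψnn : ∀ i, ∀ t ∈ Icc (0:ℝ) T, 0 ≤ ψ t i)
    (hψne : ∃ i, ∃ t ∈ Icc (0:ℝ) T, ψ t i ≠ 0)
    (hψper : ψ 0 = ψ T)
    (hψeq : ∀ i, ∀ t ∈ Icc (0:ℝ) T,
      (∑ k, ℓ k i xb t * ψ t k) + ψt t i = θM * ψ t i) :
    θM < lam :=
  stmt_15_general Ω hΩopen hΩbdd T hT d hd J hJcont hJnn hJdiag ℓ lam φ φt hφcont hφderiv hφper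
    hφpos hφeq xb hxb θM ψ ψt hψderiv hψnn hψne hψper hψeq
end
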